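/- arXiv:1005.4111 — 12 statements merged into one kernel-verified Lean document; each statement's English description precedes it below -/
import Mathlib

section
/- Let E be a Hausdorff topological semilattice with zero 0 such that every non-zero idempotent of E is primitive (minimal among non-zero idempotents). Then every non-zero element of E is an isolated point of E. -/
/-- In a Hausdorff topological semilattice `E` with zero (a commutative
idempotent topological semigroup with absorbing zero) in which every non-zero
idempotent (i.e. every non-zero element) is primitive, every non-zero element is an
isolated point of `E`. -/
theorem stmt_0 {E : Type*} [SemigroupWithZero E] [TopologicalSpace E] [T2Space E]
    [ContinuousMul E]
    (hcomm : ∀ x y : E, x * y = y * x)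
    (hidem : ∀ x : E, x * x = x)
    (hprim : ∀ e : E, e ≠ 0 → ∀ f : E, f ≠ 0 → f * e = f → e * f = f → f = e) :
    ∀ x : E, x ≠ 0 → IsOpen ({x} : Set E) := by
  intro x hx
  have key : (fun y : E => x * y) ⁻¹' ({0}ᶜ) = {x} := by
    ext y
    simp only [Set.mem_preimage, Set.mem_compl_iff, Set.mem_singleton_iff]
    constructor
    · intro h
      have hy : y ≠ 0 := by rintro rfl; exact h (mul_zero x)
      have h1 : (x * y) * x = x * y := by
        rw [hcomm (x * y) x, ← mul_assoc, hidem]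
      have h2 : x * (x * y) = x * y := by rw [← mul_assoc, hidem]
      have hxy : x * y = x := hprim x hx (x * y) h h1 h2
      have h3 : (x * y) * y = x * y := by rw [mul_assoc, hidem]
      have h4 : y * (x * y) = x * y := by
        rw [hcomm y (x * y), mul_assoc, hidem]
      have hyy : x * y = y := hprim y hy (x * y) h h3 h4
      rw [← hyy, hxy]
    · rintro rfl; rw [hidem]; exact hx
  rw [← key]
  exact isOpen_compl_singleton.preimage (continuous_const.mul continuous_id)
end

section
/- The topological semigroup (Z^0, τ) is H-closed: whenever Z^0 is embedded topologically and algebraically into a Hausdorff topological semigroup T, the image of Z^0 is closed in T. -/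
/-- Multiplication on `Z⁰ = ℤ ∪ {∞}`, where `none` plays the role of the adjoined
zero (absorbing element) `∞` and multiplication of integers is addition. -/
def zmul : Option ℤ → Option ℤ → Option ℤ
  | some a, some b => some (a + b)
  | _, _ => none

/-- The topology `τ` on `Z⁰`: every integer is isolated, and the sets
`U n = {∞} ∪ {x ∈ ℤ : x ≥ n}` (for positive integers `n`) form a neighbourhood base
at `∞`. -/
def ztop : TopologicalSpace (Option ℤ) :=
  TopologicalSpace.generateFrom
    ({s | ∃ n : ℤ, s = {some n}} ∪
      {s | ∃ n : ℤ, 0 < n ∧ s = insert none {x | ∃ m : ℤ, n ≤ m ∧ x = some m}})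

/-- `(Z⁰, τ)` is `H`-closed: whenever `Z⁰` is embedded topologically and
algebraically into a Hausdorff topological semigroup `T`, its image is closed in `T`. -/
theorem stmt_2 {T : Type*} [Semigroup T] [TopologicalSpace T] [T2Space T]
    [ContinuousMul T] (f : Option ℤ → T)
    (hmul : ∀ x y : Option ℤ, f (zmul x y) = f x * f y)
    (hemb : letI : TopologicalSpace (Option ℤ) := ztop
      Topology.IsEmbedding f) :
    IsClosed (Set.range f) := by
  classical
  letI : TopologicalSpace (Option ℤ) := ztop
  have hinj : Function.Injective f := hemb.injective
  -- `some a → none` in `ztop` as `a → +∞`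
  have hsome : Filter.Tendsto (fun a : ℤ => (some a : Option ℤ)) Filter.atTop (nhds none) := by
    have hnhds : (nhds (none : Option ℤ)) =
        ⨅ s ∈ {s | (none : Option ℤ) ∈ s ∧ s ∈ ({s | ∃ n : ℤ, s = {some n}} ∪
          {s | ∃ n : ℤ, 0 < n ∧ s = insert none {x | ∃ m : ℤ, n ≤ m ∧ x = some m}})}, Filter.principal s :=
      TopologicalSpace.nhds_generateFrom
    rw [hnhds]
    refine Filter.tendsto_iInf.2 fun s => Filter.tendsto_iInf.2 fun hs =>
      Filter.tendsto_principal.2 ?_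
    obtain ⟨hns, hsG⟩ := hs
    rcases hsG with ⟨n, rfl⟩ | ⟨n, hn, rfl⟩
    · exact absurd hns (by simp)
    · filter_upwards [Filter.eventually_ge_atTop n] with a ha
      exact Set.mem_insert_iff.2 (Or.inr ⟨a, ha, rfl⟩)
  set g : ℤ → T := fun a => f (some a) with hgdef
  have hgz : Filter.Tendsto g Filter.atTop (nhds (f none)) :=
    (hemb.continuous.tendsto none).comp hsome
  rw [isClosed_iff_clusterPt]
  intro t hcl
  by_contra ht
  have htz : t ≠ f none := fun h => ht (h ▸ ⟨none, rfl⟩)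
  have htm : ∀ m : ℤ, t ≠ f (some m) := fun m h => ht (h ▸ ⟨some m, rfl⟩)
  set L : Filter ℤ := Filter.comap g (nhds t) with hLdef
  have hLne : L.NeBot := by
    rw [hLdef, Filter.comap_neBot_iff]
    intro U hU
    have hU' : U ∩ {f none}ᶜ ∈ nhds t :=
      Filter.inter_mem hU (isOpen_compl_singleton.mem_nhds htz)
    have hclos : t ∈ closure (Set.range f) := mem_closure_iff_clusterPt.2 hcl
    rcases mem_closure_iff_nhds.1 hclos _ hU' with ⟨x, ⟨hxU, hxz⟩, o, rfl⟩
    cases o with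
    | none => exact absurd rfl hxz
    | some a => exact ⟨a, hxU⟩
  have hgt : Filter.Tendsto g L (nhds t) := Filter.tendsto_comap
  by_cases hcase : (L ⊓ Filter.atTop).NeBot
  · exact htz (tendsto_nhds_unique (hgt.mono_left inf_le_left) (hgz.mono_left inf_le_right))
  · rw [Filter.neBot_iff, not_not] at hcase
    obtain ⟨s, hsL, v, hv, hsv⟩ := Filter.inf_eq_bot_iff.1 hcase
    obtain ⟨k, hk⟩ := Filter.mem_atTop_sets.1 hv
    have hsk : ∀ a ∈ s, a < k := by
      intro a ha
      by_contra h
      have : a ∈ s ∩ v := ⟨ha, hk a (not_lt.1 h)⟩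
      rw [hsv] at this
      exact this
    have hcompl : ∀ m : ℤ, ({m}ᶜ : Set ℤ) ∈ L := by
      intro m
      refine Filter.mem_comap.2 ⟨{f (some m)}ᶜ, isOpen_compl_singleton.mem_nhds (htm m), ?_⟩
      intro a ha hm
      rw [Set.mem_singleton_iff] at hm
      exact ha (by rw [Set.mem_singleton_iff, hgdef]; rw [hm])
    have hcof : L ≤ Filter.cofinite :=
      Filter.le_cofinite_iff_compl_singleton_mem.2 hcompl
    have hbot : Filter.Tendsto (fun a : ℤ => a) L Filter.atBot := by
      rw [Filter.tendsto_atBot]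
      intro b
      have hfin : ((Finset.Ico b k : Finset ℤ) : Set ℤ)ᶜ ∈ L :=
        hcof ((Finset.Ico b k).finite_toSet.compl_mem_cofinite)
      filter_upwards [hsL, hfin] with a has hac
      by_contra h
      push_neg at h
      exact hac (by simpa [Finset.mem_Ico] using ⟨h.le, hsk a has⟩)
    have hzneg : Filter.Tendsto (fun a : ℤ => g (-a)) L (nhds (f none)) :=
      hgz.comp (Filter.tendsto_neg_atBot_atTop.comp hbot)
    have hmulz : Filter.Tendsto (fun a : ℤ => g a * f none) L (nhds (t * f none)) :=
      hgt.mul tendsto_const_nhds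
    have hconst : (fun a : ℤ => g a * f none) = fun _ : ℤ => f none := by
      funext a
      rw [hgdef, ← hmul]
      rfl
    rw [hconst] at hmulz
    have htz2 : t * f none = f none :=
      (tendsto_nhds_unique tendsto_const_nhds hmulz).symm
    have hprod : Filter.Tendsto (fun a : ℤ => g a * g (-a)) L (nhds (t * f none)) :=
      hgt.mul hzneg
    have hconst2 : (fun a : ℤ => g a * g (-a)) = fun _ : ℤ => f (some 0) := by
      funext a
      rw [hgdef]
      show f (some a) * f (some (-a)) = f (some 0)
      rw [← hmul]
      norm_num [zmul]
    rw [hconst2] at hprod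
    have hfin : f (some 0) = t * f none := tendsto_nhds_unique tendsto_const_nhds hprod
    rw [htz2] at hfin
    exact (by simp : (some 0 : Option ℤ) ≠ none) (hinj hfin)
end

section
/- Let S be a Hausdorff topological inverse semigroup (with continuous multiplication and continuous inversion) with zero, in which every non-zero idempotent is primitive. Then for any two non-zero idempotents e, f of S, the H-class H(e,f) = { x ∈ S : x·x⁻¹ = e and x⁻¹·x = f } is a clopen subset of S. -/
/-- Let `S` be a Hausdorff topological inverse semigroup with zero
(jointly continuous multiplication, continuous inversion `inv`, inverses unique) in
which every non-zero idempotent is primitive. Then for any two non-zero idempotents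
`e, f` the `H`-class `H(e,f) = {x | x * x⁻¹ = e ∧ x⁻¹ * x = f}` is clopen in `S`. -/
theorem stmt_3 {S : Type*} [SemigroupWithZero S] [TopologicalSpace S] [T2Space S]
    [ContinuousMul S]
    (inv : S → S)
    (hinv : ∀ x : S, x * inv x * x = x ∧ inv x * x * inv x = inv x)
    (huniq : ∀ x y : S, x * y * x = x → y * x * y = y → y = inv x)
    (hcont : Continuous inv)
    (hprim : ∀ e : S, e ≠ 0 → e * e = e →
      ∀ f : S, f ≠ 0 → f * f = f → e * f = f → f * e = f → f = e)
    (e f : S) (he0 : e ≠ 0) (he : e * e = e) (hf0 : f ≠ 0) (hf : f * f = f) :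
    IsClopen {x : S | x * inv x = e ∧ inv x * x = f} := by
  -- idempotents are their own inverses
  have hinv_idem : ∀ a : S, a * a = a → inv a = a := by
    intro a ha
    exact (huniq a a (by rw [ha, ha]) (by rw [ha, ha])).symm
  -- product of idempotents is idempotent
  have idem_mul : ∀ a b : S, a * a = a → b * b = b → (a * b) * (a * b) = a * b := by
    intro a b ha hb
    have ha' : ∀ z : S, a * (a * z) = a * z := fun z => by rw [← mul_assoc, ha]
    have hb' : ∀ z : S, b * (b * z) = b * z := fun z => by rw [← mul_assoc, hb]
    set y := inv (a * b) with hy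
    have hy2 := (hinv (a * b)).2
    have hy1' : ∀ z : S, y * (a * (b * (y * z))) = y * z := by
      intro z
      calc y * (a * (b * (y * z))) = (y * (a * b) * y) * z := by simp only [mul_assoc]
        _ = y * z := by rw [hy2]
    have h1 : (a * b) * (b * y * a) * (a * b) = a * b := by
      have h := (hinv (a * b)).1
      simp only [mul_assoc] at h ⊢
      simpa [ha', hb'] using h
    have h2 : (b * y * a) * (a * b) * (b * y * a) = b * y * a := by
      simp only [mul_assoc]
      rw [ha', hb', hy1']
    have hby : b * y * a = y := huniq (a * b) (b * y * a) h1 h2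
    have hyy : y * y = y := by
      conv_lhs => rw [← hby]
      calc (b * y * a) * (b * y * a) = b * (y * (a * (b * (y * a)))) := by
            simp only [mul_assoc]
        _ = b * (y * a) := by rw [hy1']
        _ = y := by rw [← mul_assoc, hby]
    have hab : a * b = y := by
      have h1' : y * (a * b) * y = y := hy2
      have h2' : (a * b) * y * (a * b) = a * b := (hinv (a * b)).1
      have := huniq y (a * b) h1' h2'
      rw [this, hinv_idem y hyy]
    rw [hab]; exact hyy
  -- idempotents commute
  have hcomm : ∀ a b : S, a * a = a → b * b = b → a * b = b * a := by
    intro a b ha hb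
    have ha' : ∀ z : S, a * (a * z) = a * z := fun z => by rw [← mul_assoc, ha]
    have hb' : ∀ z : S, b * (b * z) = b * z := fun z => by rw [← mul_assoc, hb]
    have hab := idem_mul a b ha hb
    have hba := idem_mul b a hb ha
    have h1 : (a * b) * (b * a) * (a * b) = a * b := by
      calc (a * b) * (b * a) * (a * b) = a * (b * (b * (a * (a * b)))) := by
            simp only [mul_assoc]
        _ = a * (b * (a * b)) := by rw [hb', ha']
        _ = a * b := by rw [← mul_assoc]; exact hab
    have h2 : (b * a) * (a * b) * (b * a) = b * a := by
      calc (b * a) * (a * b) * (b * a) = b * (a * (a * (b * (b * a)))) := by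
            simp only [mul_assoc]
        _ = b * (a * (b * a)) := by rw [ha', hb']
        _ = b * a := by rw [← mul_assoc]; exact hba
    have := huniq (a * b) (b * a) h1 h2
    rw [this, hinv_idem _ hab]
  -- key primitivity claim
  have claim : ∀ g : S, g ≠ 0 → g * g = g → ∀ a : S, a * a = a → a * g ≠ 0 → a = g := by
    intro g hg0 hg a ha hne
    have ha0 : a ≠ 0 := fun h => hne (by rw [h, zero_mul])
    have hidem : (a * g) * (a * g) = a * g := idem_mul a g ha hg
    have hcom : a * g = g * a := hcomm a g ha hg
    have h1 : g * (a * g) = a * g := by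
      rw [← mul_assoc, ← hcom, mul_assoc, hg]
    have h2 : (a * g) * g = a * g := by rw [mul_assoc, hg]
    have hge : a * g = g := hprim g hg0 hg (a * g) hne hidem h1 h2
    have h3 : a * (a * g) = a * g := by rw [← mul_assoc, ha]
    have h4 : (a * g) * a = a * g := by rw [hcom, mul_assoc, ha]
    have hga : a * g = a := hprim a ha0 ha (a * g) hne hidem h3 h4
    rw [← hga, hge]
  -- closedness
  have hclosed : IsClosed {x : S | x * inv x = e ∧ inv x * x = f} := by
    have h1 : IsClosed {x : S | x * inv x = e} :=
      isClosed_eq (continuous_id.mul hcont) continuous_const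
    have h2 : IsClosed {x : S | inv x * x = f} :=
      isClosed_eq (hcont.mul continuous_id) continuous_const
    exact h1.inter h2
  -- openness: the set equals an open set
  have hset : {x : S | x * inv x = e ∧ inv x * x = f} =
      {x : S | x * inv x * e ≠ 0} ∩ {x : S | inv x * x * f ≠ 0} := by
    ext x
    constructor
    · rintro ⟨h1, h2⟩
      constructor
      · simp only [Set.mem_setOf_eq, h1, he]; exact he0
      · simp only [Set.mem_setOf_eq, h2, hf]; exact hf0
    · rintro ⟨h1, h2⟩
      have ha : (x * inv x) * (x * inv x) = x * inv x := by
        conv_lhs => rw [← mul_assoc, (hinv x).1]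
      have hb : (inv x * x) * (inv x * x) = inv x * x := by
        conv_lhs => rw [← mul_assoc, (hinv x).2]
      exact ⟨claim e he0 he (x * inv x) ha h1, claim f hf0 hf (inv x * x) hb h2⟩
  have hopen : IsOpen {x : S | x * inv x = e ∧ inv x * x = f} := by
    rw [hset]
    have h1 : IsOpen {x : S | x * inv x * e ≠ 0} := by
      have : Continuous fun x : S => x * inv x * e :=
        (continuous_id.mul hcont).mul continuous_const
      exact isOpen_compl_singleton.preimage this
    have h2 : IsOpen {x : S | inv x * x * f ≠ 0} := by
      have : Continuous fun x : S => inv x * x * f :=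
        (hcont.mul continuous_id).mul continuous_const
      exact isOpen_compl_singleton.preimage this
    exact h1.inter h2
  exact ⟨hclosed, hopen⟩
end

section
/- Let S be a Hausdorff topological inverse semigroup with zero in which every non-zero idempotent is primitive. Then in the band E(S) of idempotents of S, every non-zero idempotent is an isolated point of E(S). -/
/-- Let `S` be a Hausdorff topological inverse semigroup with zero in
which every non-zero idempotent is primitive. Then every non-zero idempotent `e` is an
isolated point of the band `E(S)` of idempotents of `S` (with the subspace topology):
there is an open set `U` of `S` whose intersection with `E(S)` is exactly `{e}`. -/
theorem stmt_4 {S : Type*} [SemigroupWithZero S] [TopologicalSpace S] [T2Space S]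
    [ContinuousMul S]
    (inv : S → S)
    (hinv : ∀ x : S, x * inv x * x = x ∧ inv x * x * inv x = inv x)
    (huniq : ∀ x y : S, x * y * x = x → y * x * y = y → y = inv x)
    (hcont : Continuous inv)
    (hprim : ∀ e : S, e ≠ 0 → e * e = e →
      ∀ f : S, f ≠ 0 → f * f = f → e * f = f → f * e = f → f = e) :
    ∀ e : S, e ≠ 0 → e * e = e →
      ∃ U : Set S, IsOpen U ∧ U ∩ {x : S | x * x = x} = {e} := by
  -- inverse of an idempotent is itself
  have hinv_id : ∀ a : S, a * a = a → inv a = a := by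
    intro a ha
    exact (huniq a a (by rw [ha, ha]) (by rw [ha, ha])).symm
  -- product of idempotents is idempotent
  have hmul_idem : ∀ a b : S, a * a = a → b * b = b → (a * b) * (a * b) = a * b := by
    intro a b ha hb
    set g := inv (a * b) with hg
    obtain ⟨h1, h2⟩ := hinv (a * b)
    have key : b * g * a = g := by
      apply huniq
      · calc a * b * (b * g * a) * (a * b)
            = a * (b * b) * g * (a * a) * b := by simp only [mul_assoc]
          _ = a * b * g * (a * b) := by rw [ha, hb]; simp only [mul_assoc]
          _ = a * b := h1
      · calc b * g * a * (a * b) * (b * g * a)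
            = b * (g * ((a * a) * (b * b) * g)) * a := by simp only [mul_assoc]
          _ = b * (g * (a * b) * g) * a := by rw [ha, hb]; simp only [mul_assoc]
          _ = b * g * a := by rw [h2]
    have hgg : g * g = g := by
      calc g * g = (b * g * a) * (b * g * a) := by rw [key]
        _ = b * (g * (a * b) * g) * a := by simp only [mul_assoc]
        _ = b * g * a := by rw [h2]
        _ = g := key
    have : a * b = inv g := huniq g (a * b) h2 h1
    rw [this, hinv_id g hgg]
    exact hgg
  -- idempotents commute
  have hcomm : ∀ a b : S, a * a = a → b * b = b → a * b = b * a := by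
    intro a b ha hb
    have h1 : (a * b) * (b * a) * (a * b) = a * b := by
      calc (a * b) * (b * a) * (a * b)
          = a * ((b * b) * (a * a) * b) := by simp only [mul_assoc]
        _ = (a * b) * (a * b) := by rw [ha, hb]; simp only [mul_assoc]
        _ = a * b := hmul_idem a b ha hb
    have h2 : (b * a) * (a * b) * (b * a) = b * a := by
      calc (b * a) * (a * b) * (b * a)
          = b * ((a * a) * (b * b) * a) := by simp only [mul_assoc]
        _ = (b * a) * (b * a) := by rw [ha, hb]; simp only [mul_assoc]
        _ = b * a := hmul_idem b a hb ha
    calc a * b = inv (b * a) := huniq (b * a) (a * b) h2 h1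
      _ = b * a := hinv_id _ (hmul_idem b a hb ha)
  intro e he hee
  obtain ⟨U0, V, hU0, hV, heU0, h0V, hdisj⟩ := t2_separation he
  refine ⟨(fun x => e * x * e) ⁻¹' U0,
    hU0.preimage (((continuous_const.mul continuous_id).mul continuous_const)), ?_⟩
  ext x
  simp only [Set.mem_inter_iff, Set.mem_preimage, Set.mem_setOf_eq, Set.mem_singleton_iff]
  constructor
  · rintro ⟨hxU, hxx⟩
    -- e * x is idempotent and e*x*e = e*x
    have hexe : e * x * e = e * x := by
      rw [mul_assoc, ← hcomm e x hee hxx, ← mul_assoc, hee]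
    have hex_idem : (e * x) * (e * x) = e * x := hmul_idem e x hee hxx
    have hex_ne : e * x ≠ 0 := by
      intro h
      rw [hexe, h] at hxU
      exact Set.disjoint_left.mp hdisj hxU h0V
    have hex_le_e : e * (e * x) = e * x := by rw [← mul_assoc, hee]
    have hex_e : (e * x) * e = e * x := by rw [mul_assoc, ← hcomm e x hee hxx, ← mul_assoc, hee]
    have hex_eq : e * x = e := hprim e he hee (e * x) hex_ne hex_idem hex_le_e hex_e
    have hx_ne : x ≠ 0 := by
      intro h; apply he; rw [← hex_eq, h, mul_zero]
    have hxe : x * e = e := by rw [← hcomm e x hee hxx]; exact hex_eq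
    exact (hprim x hx_ne hxx e he hee hxe hex_eq).symm
  · rintro rfl
    exact ⟨by rw [hee, hee]; exact heU0, hee⟩
end

section
/- Let S be a Hausdorff topological semigroup with zero that is an orthogonal sum of Brandt semigroups B_{λ_i}(G_i), i ∈ A (i.e., all these Brandt semigroups share the zero of S, their pairwise products lie in {0}, and their union is S). If (α,g,β) is a non-zero element of B_{λ_i}(G_i) for which the unit elements (α,1_i,α) and (β,1_i,β) belong to S, then there exists an open neighbourhood U of (α,g,β) in S with 0 ∉ U and U ⊆ {(α, h, β) : h ∈ G_i}, i.e., U is contained in the H-class (α, G_i, β). -/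
/-- Let `S` be a Hausdorff topological semigroup with zero which is an
orthogonal sum of Brandt semigroups `B_{λ i}(G i)`: the non-zero part of each summand
is embedded via `f i : L i × G i × L i → S`, products within a summand are Brandt
products, products across distinct summands are `0`, and the summands cover
`S \ {0}`.  If `(α, g, β)` is a non-zero element of the `i`-th summand (so that the
units `(α,1,α)` and `(β,1,β)` belong to `S`), then there is an open neighbourhood `U`
of `f i (α,g,β)` in `S` contained in the non-zero part `{f i (α,h,β) : h ∈ G i}` of
its `H`-class. -/
theorem stmt_7 {S : Type*} [SemigroupWithZero S] [TopologicalSpace S] [T2Space S]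
    [ContinuousMul S]
    {ι : Type*} {L : ι → Type*} {G : ι → Type*} [∀ i, Group (G i)]
    (f : ∀ i, L i × G i × L i → S)
    (hne : ∀ i p, f i p ≠ 0)
    (hinj : ∀ i, Function.Injective (f i))
    (hdis : ∀ i j, i ≠ j → ∀ p q, f i p ≠ f j q)
    (hcover : ∀ x : S, x ≠ 0 → ∃ i p, f i p = x)
    (hbrandt : ∀ i (a : L i) (g : G i) (b c : L i) (h : G i) (d : L i),
      (b = c → f i (a, g, b) * f i (c, h, d) = f i (a, g * h, d)) ∧
      (b ≠ c → f i (a, g, b) * f i (c, h, d) = 0))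
    (hcross : ∀ i j, i ≠ j → ∀ p q, f i p * f j q = 0)
    (i : ι) (α : L i) (g : G i) (β : L i) :
    ∃ U : Set S, IsOpen U ∧ f i (α, g, β) ∈ U ∧
      U ⊆ {x : S | ∃ h : G i, x = f i (α, h, β)} := by
  set e₁ : S := f i (α, 1, α) with he₁
  set e₂ : S := f i (β, 1, β) with he₂
  set φ : S → S := fun x => e₁ * x * e₂ with hφ
  have hcont : Continuous φ := by
    continuity
  refine ⟨φ ⁻¹' {0}ᶜ, (isClosed_singleton.isOpen_compl).preimage hcont, ?_, ?_⟩
  · have h1 : e₁ * f i (α, g, β) = f i (α, 1 * g, β) :=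
      (hbrandt i α 1 α α g β).1 rfl
    have h2 : f i (α, 1 * g, β) * e₂ = f i (α, (1 * g) * 1, β) :=
      (hbrandt i α (1 * g) β β 1 β).1 rfl
    simp only [Set.mem_preimage, Set.mem_compl_iff, Set.mem_singleton_iff, hφ]
    rw [h1, h2]
    exact hne i _
  · intro x hx
    simp only [Set.mem_preimage, Set.mem_compl_iff, Set.mem_singleton_iff, hφ] at hx
    by_cases hx0 : x = 0
    · exact absurd (by rw [hx0, mul_zero, zero_mul]) hx
    obtain ⟨j, ⟨a, h, b⟩, rfl⟩ := hcover x hx0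
    by_cases hij : i = j
    · subst hij
      by_cases hαa : α = a
      · have h1 : e₁ * f i (a, h, b) = f i (α, 1 * h, b) :=
          (hbrandt i α 1 α a h b).1 hαa
        by_cases hbβ : b = β
        · exact ⟨h, by rw [hαa, hbβ]⟩
        · have h2 : f i (α, 1 * h, b) * e₂ = 0 :=
            (hbrandt i α (1 * h) b β 1 β).2 hbβ
          exact absurd (by rw [h1, h2]) hx
      · have h1 : e₁ * f i (a, h, b) = 0 := (hbrandt i α 1 α a h b).2 hαa
        exact absurd (by rw [h1, zero_mul]) hx
    · have h1 : e₁ * f j (a, h, b) = 0 := hcross i j hij _ _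
      exact absurd (by rw [h1, zero_mul]) hx
end

section
/- Every primitive countably compact Hausdorff topological inverse semigroup S is topologically isomorphic to an orthogonal sum Σ_{i∈A} B_{λ_i}(G_i) of topological Brandt λ_i-extensions of countably compact topological groups G_i, where each cardinal λ_i is finite. -/
universe u

/-- A space is countably compact if every countable open cover has a finite
subcover. -/
def CountablyCompact (X : Type*) [TopologicalSpace X] : Prop :=
  ∀ U : ℕ → Set X, (∀ n, IsOpen (U n)) → (⋃ n, U n) = Set.univ →
    ∃ t : Finset ℕ, (⋃ n ∈ t, U n) = Set.univ

/-- `inv` is an inversion making the semigroup an inverse semigroup: each `x` has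
`inv x` as an inverse, and inverses are unique. -/
def InvSgrp {S : Type*} [Semigroup S] (inv : S → S) : Prop :=
  (∀ x : S, x * inv x * x = x) ∧ (∀ x : S, inv x * x * inv x = inv x) ∧
    ∀ x y : S, x * y * x = x → y * x * y = y → y = inv x

/-!
Idempotents of an inverse semigroup commute, so in a primitive one the product of two distinct
non-zero idempotents, being a non-zero idempotent below both, must vanish. Group the non-zero
idempotents into `𝒟`-classes; in each class fix an idempotent `e` and, for every idempotent `a` of
the class, an element `u_a` with `u_a⁻¹ u_a = e` and `u_a u_a⁻¹ = a`. Every non-zero `x` is then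
uniquely `u_a g u_b⁻¹` with `g` in the maximal subgroup `H_e` (take `a = x x⁻¹`, `b = x⁻¹ x`), and
orthogonality makes these coordinates multiply as in the Brandt semigroup over `H_e`.

Topologically, `H_e` is closed, hence a countably compact topological group, and
`g ↦ u_a g u_a⁻¹` has the continuous left inverse `y ↦ u_a⁻¹ y u_a`. If a class had infinitely
many idempotents, the `u_a` would give a sequence with `u_a⁻¹ u_a = e` and `u_a⁻¹ u_b = 0` for
`a ≠ b`, and at a cluster point `y` of it `y⁻¹ y` would be both `e` and `0`.
-/

open Topology

theorem mul_mul_eq_of_mul_eq {M : Type*} [Semigroup M] {a b c : M} (h : a * b = c) (x : M) :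
    a * (b * x) = c * x := by
  rw [← mul_assoc, h]

theorem countablyCompact_iff_countablyCompactSpace {X : Type*} [TopologicalSpace X] :
    CountablyCompact X ↔ CountablyCompactSpace X := by
  simp only [CountablyCompact, ← isCountablyCompact_univ_iff,
    isCountablyCompact_iff_countable_open_cover, Set.univ_subset_iff]

theorem IsClosed.countablyCompact {X : Type*} [TopologicalSpace X] [CountablyCompactSpace X]
    {A : Set X} (hA : IsClosed A) : CountablyCompact A :=
  countablyCompact_iff_countablyCompactSpace.2
    (isCountablyCompact_iff_countablyCompactSpace.1 hA.isCountablyCompact)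

/-- At a cluster point `y` of `s`, the value `φ (y, y)` is a limit of both constants. -/
theorem CountablyCompactSpace.eq_of_seq {X Y : Type*} [TopologicalSpace X]
    [CountablyCompactSpace X] [TopologicalSpace Y] [T1Space Y] {φ : X × X → Y} (hφ : Continuous φ)
    {s : ℕ → X} {e z : Y} (hdiag : ∀ n, φ (s n, s n) = e)
    (hoff : ∀ n m, n ≠ m → φ (s n, s m) = z) : e = z := by
  obtain ⟨y, -, hy⟩ := CountablyCompactSpace.isCountablyCompact_univ.seq_clusterPt s
    (Filter.Eventually.of_forall fun _ => Set.mem_univ _)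
  have hnear : ∀ V ∈ 𝓝 (φ (y, y)), e ∈ V ∧ z ∈ V := by
    intro V hV
    obtain ⟨U₁, hU₁, U₂, hU₂, hU⟩ := mem_nhds_prod_iff.1 (hφ.continuousAt.preimage_mem_nhds hV)
    have hfreq := Filter.frequently_atTop.1
      (mapClusterPt_iff_frequently.1 hy _ (Filter.inter_mem hU₁ hU₂))
    obtain ⟨n, -, hn⟩ := hfreq 0
    obtain ⟨m, hnm, hm⟩ := hfreq (n + 1)
    exact ⟨hdiag n ▸ hU ⟨hn.1, hn.2⟩, hoff n m (by omega) ▸ hU ⟨hn.1, hm.2⟩⟩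
  have he : e ⤳ φ (y, y) := specializes_iff_pure.2 (Filter.pure_le_iff.2 fun V hV => (hnear V hV).1)
  have hz : z ⤳ φ (y, y) := specializes_iff_pure.2 (Filter.pure_le_iff.2 fun V hV => (hnear V hV).2)
  exact he.eq.trans hz.eq.symm

def IsPrimitive (S : Type*) [Mul S] [Zero S] : Prop :=
  ∀ e : S, e ≠ 0 → e * e = e → ∀ f : S, f ≠ 0 → f * f = f → e * f = f → f * e = f → f = e

namespace InvSgrp

section Semigroup

variable {S : Type*} [Semigroup S] {inv : S → S}

theorem mul_inv_mul (hinv : InvSgrp inv) (x : S) : x * inv x * x = x := hinv.1 x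

theorem inv_mul_inv (hinv : InvSgrp inv) (x : S) : inv x * x * inv x = inv x := hinv.2.1 x

theorem eq_inv (hinv : InvSgrp inv) {x y : S} (h₁ : x * y * x = x) (h₂ : y * x * y = y) :
    y = inv x :=
  hinv.2.2 x y h₁ h₂

theorem inv_inv (hinv : InvSgrp inv) (x : S) : inv (inv x) = x :=
  (hinv.eq_inv (hinv.inv_mul_inv x) (hinv.mul_inv_mul x)).symm

theorem inv_eq_self (hinv : InvSgrp inv) {e : S} (he : IsIdempotentElem e) : inv e = e :=
  (hinv.eq_inv (by rw [he.eq, he.eq]) (by rw [he.eq, he.eq])).symm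

theorem isIdempotentElem_mul_inv (hinv : InvSgrp inv) (x : S) : IsIdempotentElem (x * inv x) := by
  rw [IsIdempotentElem, ← mul_assoc, hinv.mul_inv_mul]

theorem isIdempotentElem_inv_mul (hinv : InvSgrp inv) (x : S) : IsIdempotentElem (inv x * x) := by
  rw [IsIdempotentElem, mul_assoc, ← mul_assoc x, hinv.mul_inv_mul]

theorem mul_eq_right_of_mul_inv_eq (hinv : InvSgrp inv) {x e : S} (h : x * inv x = e) :
    e * x = x :=
  h ▸ hinv.mul_inv_mul x

theorem mul_eq_left_of_inv_mul_eq (hinv : InvSgrp inv) {x e : S} (h : inv x * x = e) :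
    x * e = x := by
  rw [← h, ← mul_assoc, hinv.mul_inv_mul]

/-- `f (e f)⁻¹ e` is another inverse of `e f`, so it equals `(e f)⁻¹`, which is therefore
idempotent, and so is `e f = ((e f)⁻¹)⁻¹`. -/
theorem isIdempotentElem_mul (hinv : InvSgrp inv) {e f : S} (he : IsIdempotentElem e)
    (hf : IsIdempotentElem f) : IsIdempotentElem (e * f) := by
  set a := inv (e * f)
  have hfae : f * a * e = a := by
    refine hinv.eq_inv ?_ ?_
    · calc e * f * (f * a * e) * (e * f) = e * f * a * (e * f) := by
            simp only [mul_assoc, he.mul_self_mul, hf.mul_self_mul]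
        _ = e * f := hinv.mul_inv_mul _
    · calc f * a * e * (e * f) * (f * a * e) = f * (a * (e * f) * a) * e := by
            simp only [mul_assoc, he.mul_self_mul, hf.mul_self_mul]
        _ = f * a * e := by rw [hinv.inv_mul_inv]
  have ha : IsIdempotentElem a :=
    calc a * a = f * (a * (e * f) * a) * e := by
          conv_lhs => rw [← hfae]
          simp only [mul_assoc]
      _ = a := by rw [hinv.inv_mul_inv, hfae]
  have hef : e * f = a := by
    rw [← hinv.inv_inv (e * f)]
    exact hinv.inv_eq_self ha
  rw [IsIdempotentElem, hef, ha.eq]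

theorem commute_of_isIdempotentElem (hinv : InvSgrp inv) {e f : S} (he : IsIdempotentElem e)
    (hf : IsIdempotentElem f) : Commute e f := by
  have hfe : f * e = inv (e * f) := by
    refine hinv.eq_inv ?_ ?_
    · simpa only [mul_assoc, he.mul_self_mul, hf.mul_self_mul] using
        (hinv.isIdempotentElem_mul he hf).eq
    · simpa only [mul_assoc, he.mul_self_mul, hf.mul_self_mul] using
        (hinv.isIdempotentElem_mul hf he).eq
  show e * f = f * e
  rw [hfe, hinv.inv_eq_self (hinv.isIdempotentElem_mul he hf)]

theorem inv_mul_rev (hinv : InvSgrp inv) (x y : S) : inv (x * y) = inv y * inv x := by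
  have hc : Commute (y * inv y) (inv x * x) :=
    hinv.commute_of_isIdempotentElem (hinv.isIdempotentElem_mul_inv y)
      (hinv.isIdempotentElem_inv_mul x)
  symm
  apply hinv.eq_inv
  · calc x * y * (inv y * inv x) * (x * y) = x * ((y * inv y) * (inv x * x)) * y := by
          simp only [mul_assoc]
      _ = x * inv x * x * (y * inv y * y) := by rw [hc.eq]; simp only [mul_assoc]
      _ = x * y := by rw [hinv.mul_inv_mul, hinv.mul_inv_mul]
  · calc inv y * inv x * (x * y) * (inv y * inv x)
        = inv y * ((inv x * x) * (y * inv y)) * inv x := by simp only [mul_assoc]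
      _ = inv y * y * inv y * (inv x * x * inv x) := by rw [← hc.eq]; simp only [mul_assoc]
      _ = inv y * inv x := by rw [hinv.inv_mul_inv, hinv.inv_mul_inv]

theorem mul_mul_inv_of_inv_mul_eq (hinv : InvSgrp inv) {x y : S} (h : inv x * x = y * inv y) :
    x * y * inv (x * y) = x * inv x := by
  rw [hinv.inv_mul_rev]
  calc x * y * (inv y * inv x) = x * (y * inv y) * inv x := by simp only [mul_assoc]
    _ = x * inv x := by rw [← h, ← mul_assoc, hinv.mul_inv_mul]

theorem inv_mul_mul_of_inv_mul_eq (hinv : InvSgrp inv) {x y : S} (h : inv x * x = y * inv y) :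
    inv (x * y) * (x * y) = inv y * y := by
  rw [hinv.inv_mul_rev]
  calc inv y * inv x * (x * y) = inv y * (inv x * x) * y := by simp only [mul_assoc]
    _ = inv y * y := by rw [h, ← mul_assoc, hinv.inv_mul_inv]

def maxSubgroup (inv : S → S) (e : S) : Set S := {g | inv g * g = e ∧ g * inv g = e}

theorem one_mem_maxSubgroup (hinv : InvSgrp inv) {e : S} (he : IsIdempotentElem e) :
    e ∈ maxSubgroup inv e := by
  have h : inv e * e = e := by rw [hinv.inv_eq_self he, he.eq]
  exact ⟨h, (hinv.inv_eq_self he).symm ▸ h⟩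

theorem mul_mem_maxSubgroup (hinv : InvSgrp inv) {e g h : S} (hg : g ∈ maxSubgroup inv e)
    (hh : h ∈ maxSubgroup inv e) : g * h ∈ maxSubgroup inv e := by
  have hgh : inv g * g = h * inv h := hg.1.trans hh.2.symm
  exact ⟨(hinv.inv_mul_mul_of_inv_mul_eq hgh).trans hh.1,
    (hinv.mul_mul_inv_of_inv_mul_eq hgh).trans hg.2⟩

theorem inv_mem_maxSubgroup (hinv : InvSgrp inv) {e g : S} (hg : g ∈ maxSubgroup inv e) :
    inv g ∈ maxSubgroup inv e :=
  ⟨by rw [hinv.inv_inv]; exact hg.2, by rw [hinv.inv_inv]; exact hg.1⟩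

abbrev maxSubgroupGroup (hinv : InvSgrp inv) {e : S} (he : IsIdempotentElem e) :
    Group (maxSubgroup inv e) :=
  letI : Mul (maxSubgroup inv e) := ⟨fun g h => ⟨g * h, hinv.mul_mem_maxSubgroup g.2 h.2⟩⟩
  letI : One (maxSubgroup inv e) := ⟨⟨e, hinv.one_mem_maxSubgroup he⟩⟩
  letI : Inv (maxSubgroup inv e) := ⟨fun g => ⟨inv g, hinv.inv_mem_maxSubgroup g.2⟩⟩
  Group.ofLeftAxioms (fun _ _ _ => Subtype.ext (mul_assoc _ _ _))
    (fun g => Subtype.ext (hinv.mul_eq_right_of_mul_inv_eq g.2.2)) (fun g => Subtype.ext g.2.1)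

/-- For `u⁻¹u = v⁻¹v = e` and `g ∈ H_e`, the element `u g v⁻¹` is the entry `(uu⁻¹, g, vv⁻¹)` of
the Brandt semigroup over `H_e`. -/
def brandt (inv : S → S) (u g v : S) : S := u * g * inv v

variable {e u v w g h : S}

theorem inv_brandt (hinv : InvSgrp inv) : inv (brandt inv u g v) = brandt inv v (inv g) u := by
  rw [brandt, brandt, hinv.inv_mul_rev, hinv.inv_mul_rev, hinv.inv_inv, mul_assoc]

theorem brandt_mul_inv_self (hinv : InvSgrp inv) (hu : inv u * u = e) (hv : inv v * v = e)
    (hg : g ∈ maxSubgroup inv e) : brandt inv u g v * inv (brandt inv u g v) = u * inv u := by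
  have hug : inv (u * g) * (u * g) = e :=
    (hinv.inv_mul_mul_of_inv_mul_eq (hu.trans hg.2.symm)).trans hg.1
  rw [brandt, hinv.mul_mul_inv_of_inv_mul_eq (by rw [hug, hinv.inv_inv, hv]),
    hinv.mul_mul_inv_of_inv_mul_eq (hu.trans hg.2.symm)]

theorem inv_brandt_mul_self (hinv : InvSgrp inv) (hu : inv u * u = e) (hv : inv v * v = e)
    (hg : g ∈ maxSubgroup inv e) : inv (brandt inv u g v) * brandt inv u g v = v * inv v := by
  have h := hinv.brandt_mul_inv_self hv hu (hinv.inv_mem_maxSubgroup hg)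
  rwa [← hinv.inv_brandt, hinv.inv_inv] at h

theorem inv_mul_brandt_mul (hinv : InvSgrp inv) (hu : inv u * u = e) (hv : inv v * v = e)
    (hg : g ∈ maxSubgroup inv e) : inv u * brandt inv u g v * v = g :=
  calc inv u * brandt inv u g v * v = (inv u * u) * (g * (inv v * v)) := by
        simp only [brandt, mul_assoc]
    _ = g := by rw [hu, hv, hinv.mul_eq_left_of_inv_mul_eq hg.1,
      hinv.mul_eq_right_of_mul_inv_eq hg.2]

theorem brandt_mul_brandt (hinv : InvSgrp inv) (hv : inv v * v = e)
    (hg : g ∈ maxSubgroup inv e) : brandt inv u g v * brandt inv v h w = brandt inv u (g * h) w :=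
  calc brandt inv u g v * brandt inv v h w = u * (g * (inv v * v)) * h * inv w := by
        simp only [brandt, mul_assoc]
    _ = brandt inv u (g * h) w := by
      rw [hv, hinv.mul_eq_left_of_inv_mul_eq hg.1, brandt, mul_assoc u]

/-- The coordinate is `g = u⁻¹ x v`. -/
theorem exists_brandt_eq (hinv : InvSgrp inv) {x : S} (hu : inv u * u = e) (hv : inv v * v = e)
    (hxu : x * inv x = u * inv u) (hxv : inv x * x = v * inv v) :
    ∃ g ∈ maxSubgroup inv e, brandt inv u g v = x := by
  have hux : inv (inv u) * inv u = x * inv x := by rw [hinv.inv_inv, hxu]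
  have hux_dom : inv (inv u * x) * (inv u * x) = v * inv v :=
    (hinv.inv_mul_mul_of_inv_mul_eq hux).trans hxv
  have hux_ran : inv u * x * inv (inv u * x) = e :=
    (hinv.mul_mul_inv_of_inv_mul_eq hux).trans (by rw [hinv.inv_inv, hu])
  refine ⟨inv u * x * v, ⟨?_, ?_⟩, ?_⟩
  · rw [hinv.inv_mul_mul_of_inv_mul_eq hux_dom, hv]
  · rw [hinv.mul_mul_inv_of_inv_mul_eq hux_dom, hux_ran]
  · calc brandt inv u (inv u * x * v) v = (u * inv u) * x * (v * inv v) := by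
          simp only [brandt, mul_assoc]
      _ = x := by rw [← hxu, ← hxv, hinv.mul_eq_right_of_mul_inv_eq rfl,
          hinv.mul_eq_left_of_inv_mul_eq rfl]

end Semigroup

section TopologicalSemigroup

variable {S : Type*} [Semigroup S] [TopologicalSpace S] [ContinuousMul S] {inv : S → S}

theorem isTopologicalGroup_maxSubgroup (hinv : InvSgrp inv) (hinvc : Continuous inv) {e : S}
    (he : IsIdempotentElem e) :
    letI := hinv.maxSubgroupGroup he
    IsTopologicalGroup (maxSubgroup inv e) :=
  letI := hinv.maxSubgroupGroup he
  { continuous_mul := (continuous_subtype_val.fst'.mul continuous_subtype_val.snd').subtype_mk _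
    continuous_inv := (hinvc.comp continuous_subtype_val).subtype_mk _ }

theorem isClosed_maxSubgroup [T2Space S] (hinvc : Continuous inv) (e : S) :
    IsClosed (maxSubgroup inv e) :=
  (isClosed_eq (hinvc.mul continuous_id) continuous_const).inter
    (isClosed_eq (continuous_id.mul hinvc) continuous_const)

theorem isEmbedding_brandt_self (hinv : InvSgrp inv) {e u : S} (hu : inv u * u = e) :
    IsEmbedding fun g : maxSubgroup inv e => brandt inv u g u := by
  have hleft : (fun y => inv u * y * u) ∘ (fun g : maxSubgroup inv e => brandt inv u g u) =
      Subtype.val :=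
    funext fun g => hinv.inv_mul_brandt_mul hu hu g.2
  refine .of_comp (g := fun y => inv u * y * u) (by unfold brandt; fun_prop) (by fun_prop) ?_
  rw [hleft]
  exact .subtypeVal

end TopologicalSemigroup

section SemigroupWithZero

variable {S : Type*} [SemigroupWithZero S] {inv : S → S}

/-- The product of commuting idempotents is their meet, a non-zero idempotent below both unless
it vanishes. -/
theorem _root_.IsPrimitive.mul_eq_zero_of_ne (hprim : IsPrimitive S) (hinv : InvSgrp inv) {e f : S}
    (he₀ : e ≠ 0) (he : IsIdempotentElem e) (hf₀ : f ≠ 0) (hf : IsIdempotentElem f)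
    (hef : e ≠ f) : e * f = 0 := by
  by_contra h
  have hc : e * f = f * e := hinv.commute_of_isIdempotentElem he hf
  have hmeet := hinv.isIdempotentElem_mul he hf
  have h_eq_e : e * f = e := hprim e he₀ he (e * f) h hmeet (he.mul_self_mul f)
    (by rw [mul_assoc, ← hc, ← mul_assoc, he.eq])
  have h_eq_f : e * f = f := hprim f hf₀ hf (e * f) h hmeet
    (by rw [hc, ← mul_assoc, hf.eq]) (hf.mul_mul_self e)
  exact hef (h_eq_e.symm.trans h_eq_f)

theorem _root_.IsPrimitive.inv_mul_eq_zero (hprim : IsPrimitive S) (hinv : InvSgrp inv) {x y : S}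
    (hx : x * inv x ≠ 0) (hy : y * inv y ≠ 0) (hxy : x * inv x ≠ y * inv y) : inv x * y = 0 :=
  calc inv x * y = inv x * x * inv x * (y * inv y * y) := by
        rw [hinv.inv_mul_inv, hinv.mul_inv_mul]
    _ = inv x * ((x * inv x) * (y * inv y)) * y := by simp only [mul_assoc]
    _ = 0 := by
      rw [hprim.mul_eq_zero_of_ne hinv hx (hinv.isIdempotentElem_mul_inv x) hy
        (hinv.isIdempotentElem_mul_inv y) hxy, mul_zero, zero_mul]

theorem mul_inv_self_ne_zero (hinv : InvSgrp inv) {x : S} (hx : x ≠ 0) : x * inv x ≠ 0 :=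
  fun h => hx (by rw [← hinv.mul_inv_mul x, h, zero_mul])

theorem inv_mul_self_ne_zero (hinv : InvSgrp inv) {x : S} (hx : x ≠ 0) : inv x * x ≠ 0 :=
  fun h => hx (by rw [← hinv.mul_inv_mul x, mul_assoc, h, mul_zero])

/-- Green's relation `𝒟`, restricted to the non-zero idempotents. -/
def dSetoid (hinv : InvSgrp inv) : Setoid {e : S // e ≠ 0 ∧ IsIdempotentElem e} where
  r e f := ∃ x, inv x * x = e ∧ x * inv x = f
  iseqv :=
    { refl := fun e => ⟨e, by rw [hinv.inv_eq_self e.2.2, e.2.2.eq],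
        by rw [hinv.inv_eq_self e.2.2, e.2.2.eq]⟩
      symm := fun ⟨x, hx₁, hx₂⟩ => ⟨inv x, by rw [hinv.inv_inv, hx₂], by rw [hinv.inv_inv, hx₁]⟩
      trans := fun ⟨x, hx₁, hx₂⟩ ⟨y, hy₁, hy₂⟩ =>
        ⟨y * x, (hinv.inv_mul_mul_of_inv_mul_eq (hy₁.trans hx₂.symm)).trans hx₁,
          (hinv.mul_mul_inv_of_inv_mul_eq (hy₁.trans hx₂.symm)).trans hy₂⟩ }

/-- The index set `I_λ` of the Brandt semigroup `B_λ(G)` of the `𝒟`-class `i`. -/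
def DClassIdem (hinv : InvSgrp inv) (i : Quotient hinv.dSetoid) : Type _ :=
  {a : {e : S // e ≠ 0 ∧ IsIdempotentElem e} // Quotient.mk _ a = i}

theorem DClassIdem.val_injective {hinv : InvSgrp inv} {i : Quotient hinv.dSetoid} :
    Function.Injective fun a : DClassIdem hinv i => a.1.1 :=
  fun _ _ h => Subtype.ext (Subtype.ext h)

theorem DClassIdem.eq_of_val_eq {hinv : InvSgrp inv} {i j : Quotient hinv.dSetoid}
    (a : DClassIdem hinv i) (b : DClassIdem hinv j) (h : a.1.1 = b.1.1) : i = j := by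
  rw [← a.2, ← b.2, Subtype.ext h]

/-- The idempotent of the `𝒟`-class `i` whose maximal subgroup is the group `G` of `B_λ(G)`. -/
noncomputable def dClassBase (hinv : InvSgrp inv) (i : Quotient hinv.dSetoid) : S := i.out.1

theorem dClassBase_ne_zero (hinv : InvSgrp inv) (i : Quotient hinv.dSetoid) :
    hinv.dClassBase i ≠ 0 :=
  i.out.2.1

theorem isIdempotentElem_dClassBase (hinv : InvSgrp inv) (i : Quotient hinv.dSetoid) :
    IsIdempotentElem (hinv.dClassBase i) :=
  i.out.2.2

theorem exists_conn (hinv : InvSgrp inv) {i : Quotient hinv.dSetoid} (a : DClassIdem hinv i) :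
    ∃ x, inv x * x = hinv.dClassBase i ∧ x * inv x = a.1.1 :=
  Quotient.exact (i.out_eq.trans a.2.symm)

noncomputable def conn (hinv : InvSgrp inv) {i : Quotient hinv.dSetoid} (a : DClassIdem hinv i) :
    S :=
  (hinv.exists_conn a).choose

theorem inv_conn_mul_self (hinv : InvSgrp inv) {i : Quotient hinv.dSetoid} (a : DClassIdem hinv i) :
    inv (hinv.conn a) * hinv.conn a = hinv.dClassBase i :=
  (hinv.exists_conn a).choose_spec.1

theorem conn_mul_inv_self (hinv : InvSgrp inv) {i : Quotient hinv.dSetoid} (a : DClassIdem hinv i) :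
    hinv.conn a * inv (hinv.conn a) = a.1.1 :=
  (hinv.exists_conn a).choose_spec.2

theorem inv_conn_mul_conn (hprim : IsPrimitive S) (hinv : InvSgrp inv)
    {i j : Quotient hinv.dSetoid} (a : DClassIdem hinv i) (b : DClassIdem hinv j)
    (h : a.1.1 ≠ b.1.1) : inv (hinv.conn a) * hinv.conn b = 0 := by
  have ha := hinv.conn_mul_inv_self a
  have hb := hinv.conn_mul_inv_self b
  exact hprim.inv_mul_eq_zero hinv (ha ▸ a.1.2.1) (hb ▸ b.1.2.1) (ha ▸ hb ▸ h)

end SemigroupWithZero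

section BrandtCoord

variable {S : Type*} [SemigroupWithZero S] {inv : S → S}

noncomputable def brandtCoord (hinv : InvSgrp inv) (i : Quotient hinv.dSetoid)
    (p : DClassIdem hinv i × maxSubgroup inv (hinv.dClassBase i) × DClassIdem hinv i) : S :=
  brandt inv (hinv.conn p.1) p.2.1 (hinv.conn p.2.2)

variable (hinv : InvSgrp inv) {i j : Quotient hinv.dSetoid}

theorem brandtCoord_mul_inv_self
    (p : DClassIdem hinv i × maxSubgroup inv (hinv.dClassBase i) × DClassIdem hinv i) :
    hinv.brandtCoord i p * inv (hinv.brandtCoord i p) = p.1.1.1 :=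
  (hinv.brandt_mul_inv_self (hinv.inv_conn_mul_self _) (hinv.inv_conn_mul_self _) p.2.1.2).trans
    (hinv.conn_mul_inv_self _)

theorem inv_brandtCoord_mul_self
    (p : DClassIdem hinv i × maxSubgroup inv (hinv.dClassBase i) × DClassIdem hinv i) :
    inv (hinv.brandtCoord i p) * hinv.brandtCoord i p = p.2.2.1.1 :=
  (hinv.inv_brandt_mul_self (hinv.inv_conn_mul_self _) (hinv.inv_conn_mul_self _) p.2.1.2).trans
    (hinv.conn_mul_inv_self _)

theorem brandtCoord_ne_zero
    (p : DClassIdem hinv i × maxSubgroup inv (hinv.dClassBase i) × DClassIdem hinv i) :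
    hinv.brandtCoord i p ≠ 0 := by
  intro h
  apply p.1.1.2.1
  rw [← hinv.brandtCoord_mul_inv_self p, h, zero_mul]

theorem brandtCoord_injective : Function.Injective (hinv.brandtCoord i) := by
  rintro ⟨a, g, b⟩ ⟨c, h, d⟩ hp
  obtain rfl : a = c := DClassIdem.val_injective <| by
    simpa only [brandtCoord_mul_inv_self] using congrArg (fun x => x * inv x) hp
  obtain rfl : b = d := DClassIdem.val_injective <| by
    simpa only [inv_brandtCoord_mul_self] using congrArg (fun x => inv x * x) hp
  have hrecover : ∀ k : maxSubgroup inv (hinv.dClassBase i),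
      inv (hinv.conn a) * hinv.brandtCoord i (a, k, b) * hinv.conn b = k := fun k =>
    hinv.inv_mul_brandt_mul (hinv.inv_conn_mul_self a) (hinv.inv_conn_mul_self b) k.2
  rw [Subtype.ext ((hrecover g).symm.trans (hp ▸ hrecover h))]

theorem brandtCoord_ne_brandtCoord (hij : i ≠ j)
    (p : DClassIdem hinv i × maxSubgroup inv (hinv.dClassBase i) × DClassIdem hinv i)
    (q : DClassIdem hinv j × maxSubgroup inv (hinv.dClassBase j) × DClassIdem hinv j) :
    hinv.brandtCoord i p ≠ hinv.brandtCoord j q := fun h =>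
  hij <| DClassIdem.eq_of_val_eq p.1 q.1 <| by
    rw [← hinv.brandtCoord_mul_inv_self p, h, hinv.brandtCoord_mul_inv_self q]

theorem exists_brandtCoord_eq {x : S} (hx : x ≠ 0) : ∃ i p, hinv.brandtCoord i p = x := by
  let r : {e : S // e ≠ 0 ∧ IsIdempotentElem e} :=
    ⟨x * inv x, hinv.mul_inv_self_ne_zero hx, hinv.isIdempotentElem_mul_inv x⟩
  let d : {e : S // e ≠ 0 ∧ IsIdempotentElem e} :=
    ⟨inv x * x, hinv.inv_mul_self_ne_zero hx, hinv.isIdempotentElem_inv_mul x⟩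
  let a : DClassIdem hinv (Quotient.mk _ r) := ⟨r, rfl⟩
  let b : DClassIdem hinv (Quotient.mk _ r) := ⟨d, Quotient.sound ⟨x, rfl, rfl⟩⟩
  obtain ⟨g, hg, hgx⟩ := hinv.exists_brandt_eq (hinv.inv_conn_mul_self a)
    (hinv.inv_conn_mul_self b) (hinv.conn_mul_inv_self a).symm (hinv.conn_mul_inv_self b).symm
  exact ⟨_, (a, ⟨g, hg⟩, b), hgx⟩

theorem brandtCoord_mul_brandtCoord (a b d : DClassIdem hinv i)
    (g h : maxSubgroup inv (hinv.dClassBase i)) :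
    letI := hinv.maxSubgroupGroup (hinv.isIdempotentElem_dClassBase i)
    hinv.brandtCoord i (a, g, b) * hinv.brandtCoord i (b, h, d) =
      hinv.brandtCoord i (a, g * h, d) :=
  hinv.brandt_mul_brandt (hinv.inv_conn_mul_self b) g.2

theorem brandtCoord_mul_brandtCoord_of_ne (hprim : IsPrimitive S)
    {p : DClassIdem hinv i × maxSubgroup inv (hinv.dClassBase i) × DClassIdem hinv i}
    {q : DClassIdem hinv j × maxSubgroup inv (hinv.dClassBase j) × DClassIdem hinv j}
    (hpq : p.2.2.1.1 ≠ q.1.1.1) : hinv.brandtCoord i p * hinv.brandtCoord j q = 0 := by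
  simp only [brandtCoord, brandt, mul_assoc,
    mul_mul_eq_of_mul_eq (hinv.inv_conn_mul_conn hprim _ _ hpq), zero_mul, mul_zero]

section TopologicalSemigroup

variable [TopologicalSpace S] [ContinuousMul S]

theorem isEmbedding_brandtCoord_diag (a : DClassIdem hinv i) :
    IsEmbedding fun g => hinv.brandtCoord i (a, g, a) :=
  hinv.isEmbedding_brandt_self (hinv.inv_conn_mul_self a)

theorem finite_dClassIdem [T1Space S] [CountablyCompactSpace S] (hprim : IsPrimitive S)
    (hinvc : Continuous inv) (i : Quotient hinv.dSetoid) : Finite (DClassIdem hinv i) := by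
  by_contra hinf
  rw [not_finite_iff_infinite] at hinf
  let a := Infinite.natEmbedding (DClassIdem hinv i)
  exact hinv.dClassBase_ne_zero i <| CountablyCompactSpace.eq_of_seq
    ((hinvc.comp continuous_fst).mul continuous_snd) (s := fun n => hinv.conn (a n))
    (fun n => hinv.inv_conn_mul_self (a n))
    (fun n m hnm => hinv.inv_conn_mul_conn hprim (a n) (a m)
      fun h => hnm (a.injective (DClassIdem.val_injective h)))

end TopologicalSemigroup

end BrandtCoord

end InvSgrp

theorem stmt_8_general {S : Type u} [SemigroupWithZero S] [TopologicalSpace S] [T2Space S]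
    [ContinuousMul S]
    (inv : S → S) (hinvc : Continuous inv) (hinv : InvSgrp inv)
    (hcc : CountablyCompact S)
    (hprim : ∀ e : S, e ≠ 0 → e * e = e →
      ∀ f : S, f ≠ 0 → f * f = f → e * f = f → f * e = f → f = e) :
    ∃ (ι : Type u) (L : ι → Type u) (G : ι → Type u)
      (gi : ∀ i, Group (G i)) (ti : ∀ i, TopologicalSpace (G i))
      (f : ∀ i, L i × G i × L i → S),
      (∀ i, letI := gi i; letI := ti i;
        IsTopologicalGroup (G i) ∧ CountablyCompact (G i)) ∧
      (∀ i, Finite (L i)) ∧ (∀ i, Nonempty (L i)) ∧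
      (∀ i p, f i p ≠ 0) ∧
      (∀ i, Function.Injective (f i)) ∧
      (∀ i j, i ≠ j → ∀ p q, f i p ≠ f j q) ∧
      (∀ x : S, x ≠ 0 → ∃ i p, f i p = x) ∧
      (∀ i, letI := gi i;
        ∀ (a : L i) (g : G i) (b c : L i) (h : G i) (d : L i),
          (b = c → f i (a, g, b) * f i (c, h, d) = f i (a, g * h, d)) ∧
          (b ≠ c → f i (a, g, b) * f i (c, h, d) = 0)) ∧
      (∀ i j, i ≠ j → ∀ p q, f i p * f j q = 0) ∧
      (∀ i (a : L i), letI := gi i; letI := ti i;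
        Topology.IsEmbedding fun g : G i => f i (a, g, a)) := by
  have : CountablyCompactSpace S := countablyCompact_iff_countablyCompactSpace.1 hcc
  refine ⟨Quotient hinv.dSetoid, hinv.DClassIdem,
    fun i => InvSgrp.maxSubgroup inv (hinv.dClassBase i),
    fun i => hinv.maxSubgroupGroup (hinv.isIdempotentElem_dClassBase i), fun _ => inferInstance,
    hinv.brandtCoord, fun i => ⟨hinv.isTopologicalGroup_maxSubgroup hinvc _,
      (InvSgrp.isClosed_maxSubgroup hinvc _).countablyCompact⟩,
    hinv.finite_dClassIdem hprim hinvc, fun i => ⟨⟨i.out, i.out_eq⟩⟩,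
    fun _ => hinv.brandtCoord_ne_zero, fun _ => hinv.brandtCoord_injective,
    fun _ _ => hinv.brandtCoord_ne_brandtCoord, fun _ => hinv.exists_brandtCoord_eq,
    fun i a g b c h d => ⟨?_, ?_⟩, fun _ _ hij _ _ => ?_,
    fun _ => hinv.isEmbedding_brandtCoord_diag⟩
  · rintro rfl
    exact hinv.brandtCoord_mul_brandtCoord a b d g h
  · exact fun hbc => hinv.brandtCoord_mul_brandtCoord_of_ne hprim
      fun h => hbc (InvSgrp.DClassIdem.val_injective h)
  · exact hinv.brandtCoord_mul_brandtCoord_of_ne hprim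
      fun h => hij (InvSgrp.DClassIdem.eq_of_val_eq _ _ h)

/-- Every primitive countably compact Hausdorff topological inverse
semigroup `S` is topologically isomorphic to an orthogonal sum of topological Brandt
`λ i`-extensions `B_{λ i}(G i)` of countably compact topological groups `G i`, with
all cardinals `λ i` finite: the non-zero parts of the summands partition `S \ {0}`
via injections `f i : L i × G i × L i → S` (`L i` finite), multiplication is the
Brandt multiplication inside each summand and zero across distinct summands, and each
maximal subgroup `{f i (a, g, a) : g ∈ G i}` carries the topology of `G i`. -/
theorem stmt_8 {S : Type u} [SemigroupWithZero S] [TopologicalSpace S] [T2Space S]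
    [ContinuousMul S] [Nontrivial S]
    (inv : S → S) (hinvc : Continuous inv) (hinv : InvSgrp inv)
    (hcc : CountablyCompact S)
    (hprim : ∀ e : S, e ≠ 0 → e * e = e →
      ∀ f : S, f ≠ 0 → f * f = f → e * f = f → f * e = f → f = e) :
    ∃ (ι : Type u) (L : ι → Type u) (G : ι → Type u)
      (gi : ∀ i, Group (G i)) (ti : ∀ i, TopologicalSpace (G i))
      (f : ∀ i, L i × G i × L i → S),
      (∀ i, letI := gi i; letI := ti i;
        IsTopologicalGroup (G i) ∧ CountablyCompact (G i)) ∧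
      (∀ i, Finite (L i)) ∧ (∀ i, Nonempty (L i)) ∧
      (∀ i p, f i p ≠ 0) ∧
      (∀ i, Function.Injective (f i)) ∧
      (∀ i j, i ≠ j → ∀ p q, f i p ≠ f j q) ∧
      (∀ x : S, x ≠ 0 → ∃ i p, f i p = x) ∧
      (∀ i, letI := gi i;
        ∀ (a : L i) (g : G i) (b c : L i) (h : G i) (d : L i),
          (b = c → f i (a, g, b) * f i (c, h, d) = f i (a, g * h, d)) ∧
          (b ≠ c → f i (a, g, b) * f i (c, h, d) = 0)) ∧
      (∀ i j, i ≠ j → ∀ p q, f i p * f j q = 0) ∧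
      (∀ i (a : L i), letI := gi i; letI := ti i;
        Topology.IsEmbedding fun g : G i => f i (a, g, a)) :=
  stmt_8_general inv hinvc hinv hcc hprim
end

section
/- Let S be a primitive countably compact Hausdorff topological inverse semigroup, written as an orthogonal sum Σ_{i∈A} B_{λ_i}(G_i) of Brandt extensions of topological groups. Then the family B(0) = { S \ (B_{λ_{i_1}}(G_{i_1}) ∪ ⋯ ∪ B_{λ_{i_n}}(G_{i_n}))^* : i_1,…,i_n ∈ A, n ∈ N } is a neighbourhood base at the zero 0 of S, where for a subset T containing 0, T^* denotes T \ {0}. -/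
/-!
Write `e i a := f i (a, 1, a)`. The non-zero H-class `{f i (c, g, d) | g}` is the set where
`z ↦ e i c * z * e i d` does not vanish, hence open. So if a sequence meets each H-class at most
once, none of its cluster points, which exist by countable compactness, is non-zero: it clusters
at `0`. Applied to `n ↦ f i (a₀, 1, aₙ)` this shows that every `L i` is finite, and applied to
points outside a neighbourhood `W` of `0` taken from infinitely many summands it shows that `W`
contains all but finitely many summands. Conversely `y ↦ y * inv y` is continuous, fixes `0` and
maps the summand `i` into the finite set `{e i a | a}`, so the preimage of the complement of
`⋃ i ∈ F, {e i a | a}` is a neighbourhood of `0` missing the summands in `F`.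
-/

open Set Filter Topology

theorem CountablyCompact.countablyCompactSpace {X : Type*} [TopologicalSpace X]
    (hX : CountablyCompact X) : CountablyCompactSpace X :=
  isCountablyCompact_univ_iff.1 <| isCountablyCompact_iff_countable_open_cover.2
    fun U hU hcover =>
      let ⟨t, ht⟩ := hX U hU (univ_subset_iff.1 hcover)
      ⟨t, ht.ge⟩

theorem CountablyCompact.exists_mapClusterPt {X : Type*} [TopologicalSpace X]
    (hX : CountablyCompact X) (x : ℕ → X) : ∃ y, MapClusterPt y atTop x :=
  let ⟨y, _, hy⟩ := hX.countablyCompactSpace.isCountablyCompact_univ.seq_clusterPt x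
    (.of_forall fun _ => mem_univ _)
  ⟨y, hy⟩

theorem mul_inv_preimage_compl_mem_nhds_zero {S : Type*} [SemigroupWithZero S]
    [TopologicalSpace S] [T1Space S] [ContinuousMul S] {inv : S → S} (hinvc : Continuous inv)
    {E : Set S} (hE : E.Finite) (h0 : (0 : S) ∉ E) : (fun y => y * inv y) ⁻¹' Eᶜ ∈ 𝓝 0 :=
  (hE.isClosed.isOpen_compl.preimage (continuous_id.mul hinvc)).mem_nhds (by simpa using h0)

section BrandtSum

variable {S : Type*} {ι : Type*} {L G : ι → Type*}

def hClass (f : ∀ i, L i × G i × L i → S) (i : ι) (c d : L i) : Set S :=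
  range fun g : G i => f i (c, g, d)

variable {f : ∀ i, L i × G i × L i → S}

theorem index_eq_of_mem_hClass (hdis : ∀ i j, i ≠ j → ∀ p q, f i p ≠ f j q) {i j : ι}
    {p : L i × G i × L i} {c d : L j} (h : f i p ∈ hClass f j c d) : i = j := by
  obtain ⟨g, hg⟩ := h
  by_contra hij
  exact hdis i j hij p _ hg.symm

theorem right_eq_of_mem_hClass (hinj : ∀ i, Function.Injective (f i)) {i : ι} {a b c d : L i}
    {g : G i} (h : f i (a, g, b) ∈ hClass f i c d) : b = d := by
  obtain ⟨_, hg⟩ := h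
  exact (congrArg (·.2.2) (hinj i hg)).symm

variable [SemigroupWithZero S] [∀ i, Group (G i)]

variable (f) in
def IsBrandtMul : Prop :=
  ∀ i (a : L i) (g : G i) (b c : L i) (h : G i) (d : L i),
    (b = c → f i (a, g, b) * f i (c, h, d) = f i (a, g * h, d)) ∧
    (b ≠ c → f i (a, g, b) * f i (c, h, d) = 0)

namespace IsBrandtMul

theorem mul_apply (hf : IsBrandtMul f) {i : ι} (a : L i) (g : G i) (b : L i) (h : G i)
    (d : L i) : f i (a, g, b) * f i (b, h, d) = f i (a, g * h, d) :=
  (hf i a g b b h d).1 rfl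

theorem mul_eq_zero (hf : IsBrandtMul f) {i : ι} (a : L i) (g : G i) {b c : L i} (h : G i)
    (d : L i) (hbc : b ≠ c) : f i (a, g, b) * f i (c, h, d) = 0 :=
  (hf i a g b c h d).2 hbc

theorem inv_apply (hf : IsBrandtMul f) {inv : S → S} (hinv : InvSgrp inv) {i : ι} (c : L i)
    (g : G i) (d : L i) : inv (f i (c, g, d)) = f i (d, g⁻¹, c) := by
  refine (hinv.2.2 _ _ ?_ ?_).symm
  · rw [hf.mul_apply, hf.mul_apply, mul_inv_cancel, one_mul]
  · rw [hf.mul_apply, hf.mul_apply, inv_mul_cancel, one_mul]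

theorem mul_inv_apply (hf : IsBrandtMul f) {inv : S → S} (hinv : InvSgrp inv) {i : ι} (c : L i)
    (g : G i) (d : L i) : f i (c, g, d) * inv (f i (c, g, d)) = f i (c, 1, c) := by
  rw [hf.inv_apply hinv, hf.mul_apply, mul_inv_cancel]

theorem mem_hClass_iff (hf : IsBrandtMul f) (hne : ∀ i p, f i p ≠ 0)
    (hcover : ∀ x : S, x ≠ 0 → ∃ i p, f i p = x)
    (hcross : ∀ i j, i ≠ j → ∀ p q, f i p * f j q = 0) {j : ι} (c d : L j) (z : S) :
    z ∈ hClass f j c d ↔ f j (c, 1, c) * z * f j (d, 1, d) ≠ 0 := by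
  constructor
  · rintro ⟨g, rfl⟩
    rw [hf.mul_apply, hf.mul_apply]
    exact hne _ _
  · intro hz
    obtain ⟨i, ⟨a, h, b⟩, rfl⟩ := hcover z (by rintro rfl; simp at hz)
    obtain rfl | hij := eq_or_ne i j
    · obtain rfl | hca := eq_or_ne c a
      · rw [hf.mul_apply] at hz
        obtain rfl | hbd := eq_or_ne b d
        · exact ⟨h, rfl⟩
        · exact absurd (hf.mul_eq_zero _ _ _ _ hbd) hz
      · exact absurd (by rw [hf.mul_eq_zero _ _ _ _ hca, zero_mul]) hz
    · exact absurd (by rw [hcross j i hij.symm, zero_mul]) hz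

theorem isOpen_hClass [TopologicalSpace S] [T1Space S] [ContinuousMul S] (hf : IsBrandtMul f)
    (hne : ∀ i p, f i p ≠ 0) (hcover : ∀ x : S, x ≠ 0 → ∃ i p, f i p = x)
    (hcross : ∀ i j, i ≠ j → ∀ p q, f i p * f j q = 0) {j : ι} (c d : L j) :
    IsOpen (hClass f j c d) := by
  have : hClass f j c d = (fun z => f j (c, 1, c) * z * f j (d, 1, d)) ⁻¹' {0}ᶜ :=
    Set.ext (hf.mem_hClass_iff hne hcover hcross c d)
  rw [this]
  exact isOpen_compl_singleton.preimage (by fun_prop)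

end IsBrandtMul

variable [TopologicalSpace S] [T1Space S] [ContinuousMul S]

theorem mapClusterPt_zero_of_subsingleton_hClass (hcc : CountablyCompact S)
    (hf : IsBrandtMul f) (hne : ∀ i p, f i p ≠ 0) (hcover : ∀ x : S, x ≠ 0 → ∃ i p, f i p = x)
    (hcross : ∀ i j, i ≠ j → ∀ p q, f i p * f j q = 0) {z : ℕ → S}
    (hz : ∀ j (c d : L j), {n | z n ∈ hClass f j c d}.Subsingleton) :
    MapClusterPt 0 atTop z := by
  obtain ⟨y, hy⟩ := hcc.exists_mapClusterPt z
  obtain rfl | hy0 := eq_or_ne y 0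
  · exact hy
  obtain ⟨j, ⟨c, g, d⟩, rfl⟩ := hcover y hy0
  have hH : hClass f j c d ∈ 𝓝 (f j (c, g, d)) :=
    (hf.isOpen_hClass hne hcover hcross c d).mem_nhds ⟨g, rfl⟩
  exact (Nat.frequently_atTop_iff_infinite.1 (hy.frequently hH) (hz j c d).finite).elim

theorem finite_of_countablyCompact (hcc : CountablyCompact S) {inv : S → S}
    (hinvc : Continuous inv) (hinv : InvSgrp inv) (hf : IsBrandtMul f)
    (hne : ∀ i p, f i p ≠ 0) (hinj : ∀ i, Function.Injective (f i))
    (hdis : ∀ i j, i ≠ j → ∀ p q, f i p ≠ f j q) (hcover : ∀ x : S, x ≠ 0 → ∃ i p, f i p = x)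
    (hcross : ∀ i j, i ≠ j → ∀ p q, f i p * f j q = 0) (i : ι) : Finite (L i) := by
  by_contra hfin
  have : Infinite (L i) := not_finite_iff_infinite.1 hfin
  let a := Infinite.natEmbedding (L i)
  have hclust : MapClusterPt 0 atTop fun n => f i (a 0, 1, a n) := by
    refine mapClusterPt_zero_of_subsingleton_hClass hcc hf hne hcover hcross
      fun j c d m hm n hn => ?_
    obtain rfl := index_eq_of_mem_hClass hdis hm
    exact a.injective
      ((right_eq_of_mem_hClass hinj hm).trans (right_eq_of_mem_hClass hinj hn).symm)
  obtain ⟨n, hn⟩ := (hclust.frequently <| mul_inv_preimage_compl_mem_nhds_zero hinvc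
    (finite_singleton (f i (a 0, 1, a 0))) (by simpa using (hne i _).symm)).exists
  exact hn (hf.mul_inv_apply hinv _ _ _)

theorem compl_biUnion_range_mem_nhds_zero [∀ i, Finite (L i)] {inv : S → S}
    (hinvc : Continuous inv) (hinv : InvSgrp inv) (hf : IsBrandtMul f) (hne : ∀ i p, f i p ≠ 0)
    (F : Finset ι) : (⋃ i ∈ F, range (f i))ᶜ ∈ 𝓝 0 := by
  have hE : (⋃ i ∈ F, range fun a : L i => f i (a, 1, a)).Finite :=
    F.finite_toSet.biUnion fun i _ => finite_range _
  have h0 : (0 : S) ∉ ⋃ i ∈ F, range fun a : L i => f i (a, 1, a) := by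
    simpa using fun i (_ : i ∈ F) a => hne i (a, 1, a)
  refine mem_of_superset (mul_inv_preimage_compl_mem_nhds_zero hinvc hE h0) ?_
  rintro _ hy ⟨_, ⟨i, rfl⟩, _, ⟨hi, rfl⟩, ⟨c, g, d⟩, rfl⟩
  exact hy (mem_biUnion hi ⟨c, (hf.mul_inv_apply hinv c g d).symm⟩)

theorem exists_finset_compl_biUnion_range_subset (hcc : CountablyCompact S) (hf : IsBrandtMul f)
    (hne : ∀ i p, f i p ≠ 0) (hdis : ∀ i j, i ≠ j → ∀ p q, f i p ≠ f j q)
    (hcover : ∀ x : S, x ≠ 0 → ∃ i p, f i p = x)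
    (hcross : ∀ i j, i ≠ j → ∀ p q, f i p * f j q = 0) {W : Set S} (hW : W ∈ 𝓝 0) :
    ∃ F : Finset ι, (⋃ i ∈ F, range (f i))ᶜ ⊆ W := by
  have hfin : {i | ¬range (f i) ⊆ W}.Finite := by
    by_contra hinf
    let e := Set.Infinite.natEmbedding _ hinf
    choose p hp using fun n => not_forall.1 fun h => (e n).2 (range_subset_iff.2 h)
    have hclust : MapClusterPt 0 atTop fun n => f (e n) (p n) := by
      refine mapClusterPt_zero_of_subsingleton_hClass hcc hf hne hcover hcross
        fun j c d m hm n hn => e.injective (Subtype.ext ?_)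
      exact (index_eq_of_mem_hClass hdis hm).trans (index_eq_of_mem_hClass hdis hn).symm
    obtain ⟨n, hn⟩ := (hclust.frequently hW).exists
    exact hp n hn
  refine ⟨hfin.toFinset, fun s hs => by_contra fun hsW => hs ?_⟩
  obtain ⟨j, p, rfl⟩ := hcover s fun h => hsW (h ▸ mem_of_mem_nhds hW)
  exact mem_biUnion (hfin.mem_toFinset.2 fun h => hsW (h ⟨p, rfl⟩)) ⟨p, rfl⟩

end BrandtSum

theorem stmt_9_general {S : Type*} [SemigroupWithZero S] [TopologicalSpace S] [T2Space S]
    [ContinuousMul S]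
    (inv : S → S) (hinvc : Continuous inv) (hinv : InvSgrp inv)
    (hcc : CountablyCompact S)
    {ι : Type*} {L : ι → Type*} {G : ι → Type*}
    [∀ i, Group (G i)]
    (f : ∀ i, L i × G i × L i → S)
    (hne : ∀ i p, f i p ≠ 0)
    (hinj : ∀ i, Function.Injective (f i))
    (hdis : ∀ i j, i ≠ j → ∀ p q, f i p ≠ f j q)
    (hcover : ∀ x : S, x ≠ 0 → ∃ i p, f i p = x)
    (hbrandt : ∀ i (a : L i) (g : G i) (b c : L i) (h : G i) (d : L i),
      (b = c → f i (a, g, b) * f i (c, h, d) = f i (a, g * h, d)) ∧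
      (b ≠ c → f i (a, g, b) * f i (c, h, d) = 0))
    (hcross : ∀ i j, i ≠ j → ∀ p q, f i p * f j q = 0) :
    (nhds (0 : S)).HasBasis (fun _ : Finset ι => True)
      (fun F => (⋃ i ∈ F, Set.range (f i))ᶜ) := by
  have hf : IsBrandtMul f := hbrandt
  have : ∀ i, Finite (L i) :=
    finite_of_countablyCompact hcc hinvc hinv hf hne hinj hdis hcover hcross
  refine ⟨fun W => ⟨fun hW => ?_, fun ⟨F, _, hF⟩ => ?_⟩⟩
  · obtain ⟨F, hF⟩ := exists_finset_compl_biUnion_range_subset hcc hf hne hdis hcover hcross hW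
    exact ⟨F, trivial, hF⟩
  · exact mem_of_superset (compl_biUnion_range_mem_nhds_zero hinvc hinv hf hne F) hF

/-- Let `S` be a primitive countably compact Hausdorff topological
inverse semigroup, written as an orthogonal sum of Brandt extensions
`B_{λ i}(G i)` of topological groups (the non-zero part of each summand embedded via
`f i`).  Then the family of sets `S \ (B_{i₁} ∪ ⋯ ∪ B_{iₙ})^*`, i.e. the complements
of the unions of finitely many non-zero parts `range (f i)`, is a neighbourhood base
at the zero `0` of `S`. -/
theorem stmt_9 {S : Type*} [SemigroupWithZero S] [TopologicalSpace S] [T2Space S]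
    [ContinuousMul S]
    (inv : S → S) (hinvc : Continuous inv) (hinv : InvSgrp inv)
    (hcc : CountablyCompact S)
    {ι : Type*} {L : ι → Type*} {G : ι → Type*}
    [∀ i, Group (G i)] [∀ i, TopologicalSpace (G i)] [∀ i, IsTopologicalGroup (G i)]
    (f : ∀ i, L i × G i × L i → S)
    (hne : ∀ i p, f i p ≠ 0)
    (hinj : ∀ i, Function.Injective (f i))
    (hdis : ∀ i j, i ≠ j → ∀ p q, f i p ≠ f j q)
    (hcover : ∀ x : S, x ≠ 0 → ∃ i p, f i p = x)
    (hbrandt : ∀ i (a : L i) (g : G i) (b c : L i) (h : G i) (d : L i),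
      (b = c → f i (a, g, b) * f i (c, h, d) = f i (a, g * h, d)) ∧
      (b ≠ c → f i (a, g, b) * f i (c, h, d) = 0))
    (hcross : ∀ i j, i ≠ j → ∀ p q, f i p * f j q = 0)
    (hemb : ∀ i (a : L i), Topology.IsEmbedding fun g : G i => f i (a, g, a)) :
    (nhds (0 : S)).HasBasis (fun _ : Finset ι => True)
      (fun F => (⋃ i ∈ F, Set.range (f i))ᶜ) :=
  stmt_9_general inv hinvc hinv hcc f hne hinj hdis hcover hbrandt hcross
end

section
/- Let S = ⋃_{α∈A} S_α be a topological inverse semigroup such that (i) each S_α is an H-closed subsemigroup in the class of topological inverse semigroups, and (ii) there exists an H-closed (in the class of topological inverse semigroups) subsemigroup T of S with S_α · S_β ⊆ T for all α ≠ β. Then S is H-closed in the class of topological inverse semigroups. -/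
universe u

/-- A topological semigroup `S` is `H`-closed in the class of topological inverse
semigroups if whenever `S` is embedded (topologically and multiplicatively) into a
topological inverse semigroup `T`, its image is closed in `T`. -/
def IsHClosedTIS (S : Type u) [TopologicalSpace S] [Semigroup S] : Prop :=
  ∀ (T : Type u) [TopologicalSpace T] [Semigroup T] [T2Space T] [ContinuousMul T]
    (invT : T → T), Continuous invT → InvSgrp invT →
    ∀ f : S → T, Topology.IsEmbedding f → (∀ x y : S, f (x * y) = f x * f y) →
      IsClosed (Set.range f)

/-- If `M` is a subsemigroup of `S` that is `H`-closed in the class of topological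
inverse semigroups, then under any embedding homomorphism of `S` into a topological
inverse semigroup `W`, the image of `M` is closed. -/
lemma image_closed_of_isHClosedTIS {S : Type u} [TopologicalSpace S] [Semigroup S]
    (M : Subsemigroup S) (hM : IsHClosedTIS ↥M)
    (W : Type u) [TopologicalSpace W] [Semigroup W] [T2Space W] [ContinuousMul W]
    (invW : W → W) (hc : Continuous invW) (hi : InvSgrp invW)
    (f : S → W) (hf : Topology.IsEmbedding f) (hfm : ∀ x y : S, f (x * y) = f x * f y) :
    IsClosed (f '' (M : Set S)) := by
  have h := hM W invW hc hi (fun m : ↥M => f ↑m)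
    (hf.comp Topology.IsEmbedding.subtypeVal)
    (fun a b => by
      have : ((a * b : ↥M) : S) = (a : S) * (b : S) := rfl
      simp [this, hfm])
  have hr : Set.range (fun m : ↥M => f ↑m) = f '' (M : Set S) := by
    ext w; simp
  rwa [hr] at h

/-- Let `S = ⋃_{α} S_α` be a topological inverse semigroup such that
(i) each `S_α` is an `H`-closed subsemigroup in the class of topological inverse
semigroups, and (ii) there is an `H`-closed (in that class) subsemigroup `T` with
`S_α · S_β ⊆ T` for all `α ≠ β`.  Then `S` is `H`-closed in the class of topological
inverse semigroups. -/
theorem stmt_11 {S : Type u} [TopologicalSpace S] [Semigroup S] [T2Space S]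
    [ContinuousMul S]
    (inv : S → S) (hinvc : Continuous inv) (hinv : InvSgrp inv)
    {ι : Type*} (A : ι → Subsemigroup S)
    (hAinv : ∀ α, ∀ x ∈ A α, inv x ∈ A α)
    (hcover : ∀ x : S, ∃ α, x ∈ A α)
    (hHc : ∀ α, IsHClosedTIS ↥(A α))
    (T : Subsemigroup S) (hTinv : ∀ x ∈ T, inv x ∈ T)
    (hTHc : IsHClosedTIS ↥T)
    (hprod : ∀ α β, α ≠ β → ∀ x ∈ A α, ∀ y ∈ A β, x * y ∈ T) :
    IsHClosedTIS S := by
  intro W _ _ _ _ invW hinvWc hinvW f hf hfm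
  apply isClosed_of_closure_subset
  intro x hx
  obtain ⟨u, hur, hux⟩ := mem_closure_iff_ultrafilter.mp hx
  set 𝒰 : Ultrafilter S := u.comap hf.injective hur with h𝒰
  -- f pushed along 𝒰 tends to x
  have hmap : Filter.Tendsto f (𝒰 : Filter S) (nhds x) := by
    have : Filter.map f (𝒰 : Filter S) ≤ (u : Filter W) := by
      rw [h𝒰]; exact Filter.map_comap_le
    exact this.trans hux
  -- f commutes with inversion
  have hfi : ∀ s : S, f (inv s) = invW (f s) := by
    intro s
    refine hinvW.2.2 (f s) (f (inv s)) ?_ ?_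
    · rw [← hfm, ← hfm, hinv.1]
    · rw [← hfm, ← hfm, hinv.2.1]
  have hmapinv : Filter.Tendsto (fun s => f (inv s)) (𝒰 : Filter S) (nhds (invW x)) := by
    have : (fun s => f (inv s)) = invW ∘ f := by funext s; exact hfi s
    rw [this]
    exact (hinvWc.tendsto x).comp hmap
  -- the closed images of the pieces
  have hTcl : IsClosed (f '' (T : Set S)) :=
    image_closed_of_isHClosedTIS T hTHc W invW hinvWc hinvW f hf hfm
  by_cases hcase : ∃ α, (A α : Set S) ∈ 𝒰
  · -- case (a): the ultrafilter lives on a single piece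
    obtain ⟨α, hα⟩ := hcase
    have hAcl : IsClosed (f '' (A α : Set S)) :=
      image_closed_of_isHClosedTIS (A α) (hHc α) W invW hinvWc hinvW f hf hfm
    have hxcl : x ∈ closure (f '' (A α : Set S)) := by
      refine mem_closure_iff_ultrafilter.mpr ⟨𝒰.map f, ?_, hmap⟩
      exact Filter.image_mem_map hα
    rw [hAcl.closure_eq] at hxcl
    obtain ⟨a, _, ha⟩ := hxcl
    exact ⟨a, ha⟩
  · -- case (b): every piece has small intersection
    push_neg at hcase
    have hcompl : ∀ α, ((A α : Set S))ᶜ ∈ 𝒰 := fun α =>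
      (Ultrafilter.compl_mem_iff_notMem).mpr (hcase α)
    -- Step 1 : invW x * x ∈ f '' T
    have hstep1 : invW x * x ∈ f '' (T : Set S) := by
      rw [← hTcl.closure_eq]
      rw [mem_closure_iff_nhds]
      intro O hO
      have hmul : Filter.Tendsto (fun p : W × W => p.1 * p.2)
          (nhds (invW x, x)) (nhds (invW x * x)) := continuous_mul.tendsto (invW x, x)
      have hO' : (fun p : W × W => p.1 * p.2) ⁻¹' O ∈ nhds (invW x, x) := hmul hO
      rw [mem_nhds_prod_iff] at hO'
      obtain ⟨O1, hO1, O2, hO2, hsub⟩ := hO'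
      have hU1 : (fun s => f (inv s)) ⁻¹' O1 ∈ 𝒰 := hmapinv hO1
      obtain ⟨s, hs⟩ := Ultrafilter.nonempty_of_mem hU1
      obtain ⟨α, hsα⟩ := hcover s
      have hU2 : f ⁻¹' O2 ∩ ((A α : Set S))ᶜ ∈ 𝒰 :=
        Filter.inter_mem (hmap hO2) (hcompl α)
      obtain ⟨t, htO, htα⟩ := Ultrafilter.nonempty_of_mem hU2
      obtain ⟨β, htβ⟩ := hcover t
      have hne : α ≠ β := fun h => htα (h ▸ htβ)
      have hmem : inv s * t ∈ T := hprod α β hne (inv s) (hAinv α s hsα) t htβ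
      refine ⟨f (inv s * t), ?_, ⟨inv s * t, hmem, rfl⟩⟩
      have : (f (inv s), f t) ∈ O1 ×ˢ O2 := ⟨hs, htO⟩
      have := hsub this
      rwa [hfm]
    obtain ⟨b, hbT, hfb⟩ := hstep1
    -- Step 2 : x ∈ f '' T
    have hxx : x * f b = x := by
      rw [hfb, ← mul_assoc, hinvW.1]
    obtain ⟨γ, hbγ⟩ := hcover b
    have hstep2 : x ∈ closure (f '' (T : Set S)) := by
      rw [mem_closure_iff_nhds]
      intro O hO
      have htend : Filter.Tendsto (fun s => f s * f b) (𝒰 : Filter S) (nhds x) := by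
        have := hmap.mul (tendsto_const_nhds (x := f b) (f := (𝒰 : Filter S)))
        rwa [hxx] at this
      have hU : (fun s => f s * f b) ⁻¹' O ∩ ((A γ : Set S))ᶜ ∈ 𝒰 :=
        Filter.inter_mem (htend hO) (hcompl γ)
      obtain ⟨s, hsO, hsγ⟩ := Ultrafilter.nonempty_of_mem hU
      obtain ⟨α, hsα⟩ := hcover s
      have hne : α ≠ γ := fun h => hsγ (h ▸ hsα)
      have hmem : s * b ∈ T := hprod α γ hne s hsα b hbγ
      exact ⟨f (s * b), by rw [hfm]; exact hsO, ⟨s * b, hmem, rfl⟩⟩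
    rw [hTcl.closure_eq] at hstep2
    obtain ⟨a, _, ha⟩ := hstep2
    exact ⟨a, ha⟩
end

section
/- Let S = ⋃_{α∈A} S_α be a topological inverse semigroup such that (i) each S_α is an absolutely H-closed subsemigroup in the class of topological inverse semigroups, and (ii) there exists an absolutely H-closed (in that class) subsemigroup T of S with S_α · S_β ⊆ T for all α ≠ β. Then S is absolutely H-closed in the class of topological inverse semigroups. -/
/-!
A semigroup is absolutely `H`-closed exactly when every continuous homomorphism into a
topological inverse semigroup has closed image, so fix such a homomorphism `g : S → G`.
The images `g(S_α)` and `g(T)` are closed. Take `x` in the closure of `g(S)` but in no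
`g(S_α)`; then every neighbourhood of `x` meets `g(S ∖ S_α)` for every `α`. Choosing `u`
and then `v` outside the component of `u`, the products `g (u * v⁻¹) = g u * (g v)⁻¹` lie in
`g(T)` and approach `x * x⁻¹`, so `x * x⁻¹ = g t` with `t ∈ T`. Likewise
`x = g t * x` is a limit of `g (t * s)` with `s` outside the component of `t`, so `x ∈ g(T)`.
-/

universe u

/-- A topological semigroup `S` is absolutely `H`-closed in the class of topological
inverse semigroups if for every continuous homomorphism `h` of `S` into a topological
inverse semigroup `G`, the image `h(S)` is `H`-closed in that class. -/
def IsAbsHClosedTIS (S : Type u) [TopologicalSpace S] [Semigroup S] : Prop :=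
  ∀ (G : Type u) [TopologicalSpace G] [Semigroup G] [T2Space G] [ContinuousMul G]
    (invG : G → G), Continuous invG → InvSgrp invG →
    ∀ h : S → G, Continuous h → (∀ x y : S, h (x * y) = h x * h y) →
      ∀ R : Subsemigroup G, (R : Set G) = Set.range h → IsHClosedTIS ↥R

open Set Topology

theorem InvSgrp.inv_inv_s12 {S : Type*} [Semigroup S] {inv : S → S} (hinv : InvSgrp inv) (x : S) :
    inv (inv x) = x :=
  (hinv.2.2 (inv x) x (hinv.2.1 x) (hinv.1 x)).symm

theorem InvSgrp.map_inv {S G : Type*} [Semigroup S] [Semigroup G] {inv : S → S}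
    {invG : G → G} (hinv : InvSgrp inv) (hinvG : InvSgrp invG) (g : S →ₙ* G) (s : S) :
    g (inv s) = invG (g s) :=
  hinvG.2.2 (g s) (g (inv s)) (by rw [← map_mul, ← map_mul, hinv.1])
    (by rw [← map_mul, ← map_mul, hinv.2.1])

theorem isAbsHClosedTIS_iff {S : Type u} [TopologicalSpace S] [Semigroup S] :
    IsAbsHClosedTIS S ↔ ∀ (G : Type u) [TopologicalSpace G] [Semigroup G] [T2Space G]
      [ContinuousMul G] (invG : G → G), Continuous invG → InvSgrp invG →
      ∀ g : S →ₙ* G, Continuous g → IsClosed (range g) := by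
  constructor
  · intro hS G _ _ _ _ invG hinvGc hinvG g hg
    have := hS G invG hinvGc hinvG g hg (map_mul g) g.srange g.coe_srange
      G invG hinvGc hinvG Subtype.val IsEmbedding.subtypeVal fun _ _ => rfl
    rwa [Subtype.range_val, MulHom.coe_srange] at this
  · intro hS G _ _ _ _ invG hinvGc hinvG h hc hmul R hR Tt _ _ _ _ invT hinvTc hinvT f hf hfmul
    have hmem : ∀ s, h s ∈ R := fun s => by rw [← SetLike.mem_coe, hR]; exact mem_range_self s
    let e : S →ₙ* R := (MulHom.mk h hmul).codRestrict R hmem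
    have he : Function.Surjective e := fun r => by
      obtain ⟨s, hs⟩ : (r : G) ∈ range h := hR ▸ r.2
      exact ⟨s, Subtype.ext hs⟩
    rw [← he.range_comp]
    exact hS Tt invT hinvTc hinvT ((MulHom.mk f hfmul).comp e)
      (hf.continuous.comp (hc.subtype_mk hmem))

theorem IsAbsHClosedTIS.isClosed_image {S G : Type u} [TopologicalSpace S] [Semigroup S]
    [TopologicalSpace G] [Semigroup G] [T2Space G] [ContinuousMul G] {P : Subsemigroup S}
    (hP : IsAbsHClosedTIS P) {invG : G → G} (hinvGc : Continuous invG)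
    (hinvG : InvSgrp invG) (g : S →ₙ* G) (hg : Continuous g) : IsClosed (g '' P) := by
  rw [image_eq_range]
  exact isAbsHClosedTIS_iff.mp hP G invG hinvGc hinvG (g.comp (MulMemClass.subtype P))
    (hg.comp continuous_subtype_val)

section Cover

variable {S G : Type*} [Semigroup S] [TopologicalSpace G] [Semigroup G] {inv : S → S}
  {invG : G → G} {ι : Type*} {A : ι → Set S} {T : Set S}

theorem mul_mem_of_notMem (hcover : ∀ x : S, ∃ α, x ∈ A α)
    (hprod : ∀ α β, α ≠ β → ∀ x ∈ A α, ∀ y ∈ A β, x * y ∈ T) {α : ι} {u v : S}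
    (hu : u ∈ A α) (hv : v ∉ A α) : u * v ∈ T := by
  obtain ⟨β, hvβ⟩ := hcover v
  exact hprod α β (by rintro rfl; exact hv hvβ) u hu v hvβ

variable [ContinuousMul G]

theorem mul_inv_mem_closure_image (hinvGc : Continuous invG) (hinv : InvSgrp inv)
    (hinvG : InvSgrp invG) (hAinv : ∀ α, ∀ x ∈ A α, inv x ∈ A α)
    (hcover : ∀ x : S, ∃ α, x ∈ A α)
    (hprod : ∀ α β, α ≠ β → ∀ x ∈ A α, ∀ y ∈ A β, x * y ∈ T) (g : S →ₙ* G) {x : G}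
    (hx : x ∈ closure (range g)) (hxA : ∀ α, x ∈ closure (g '' (A α)ᶜ)) :
    x * invG x ∈ closure (g '' T) := by
  rw [mem_closure_iff_nhds]
  intro W hW
  have hcont : Continuous fun p : G × G => p.1 * invG p.2 :=
    continuous_fst.mul (hinvGc.comp continuous_snd)
  have hWx : ∀ᶠ p in 𝓝 x ×ˢ 𝓝 x, p.1 * invG p.2 ∈ W := by
    rw [← nhds_prod_eq]
    exact hcont.continuousAt.preimage_mem_nhds hW
  obtain ⟨V, hV, hVW⟩ :=
    (Filter.eventually_prod_self_iff (r := fun a b => a * invG b ∈ W)).mp hWx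
  obtain ⟨_, hgu, u, rfl⟩ := mem_closure_iff_nhds.mp hx V hV
  obtain ⟨α, hu⟩ := hcover u
  obtain ⟨_, hgv, v, hv, rfl⟩ := mem_closure_iff_nhds.mp (hxA α) V hV
  have hv' : inv v ∉ A α := fun h => hv (hinv.inv_inv_s12 v ▸ hAinv α _ h)
  refine ⟨g (u * inv v), ?_, u * inv v, mul_mem_of_notMem hcover hprod hu hv', rfl⟩
  rw [map_mul, hinv.map_inv hinvG]
  exact hVW _ hgu _ hgv

theorem isClosed_range_of_isClosed_image (hinvGc : Continuous invG) (hinv : InvSgrp inv)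
    (hinvG : InvSgrp invG) (hAinv : ∀ α, ∀ x ∈ A α, inv x ∈ A α)
    (hcover : ∀ x : S, ∃ α, x ∈ A α)
    (hprod : ∀ α β, α ≠ β → ∀ x ∈ A α, ∀ y ∈ A β, x * y ∈ T) (g : S →ₙ* G)
    (hA : ∀ α, IsClosed (g '' A α)) (hT : IsClosed (g '' T)) : IsClosed (range g) := by
  refine isClosed_of_closure_subset fun x hx => ?_
  by_cases hxA : ∃ α, x ∈ g '' A α
  · obtain ⟨α, s, -, rfl⟩ := hxA
    exact mem_range_self s
  push Not at hxA
  have hxAc : ∀ α, x ∈ closure (g '' (A α)ᶜ) := fun α => by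
    have hx' : x ∈ g '' A α ∪ closure (g '' (A α)ᶜ) := by
      rwa [← (hA α).closure_eq, ← closure_union, ← image_union, union_compl_self, image_univ]
    exact hx'.resolve_left (hxA α)
  obtain ⟨t, -, hgt⟩ :=
    hT.closure_subset (mul_inv_mem_closure_image hinvGc hinv hinvG hAinv hcover hprod g hx hxAc)
  obtain ⟨α, ht⟩ := hcover t
  have htx : g t * x ∈ closure (g '' T) :=
    map_mem_closure (continuous_const_mul (g t)) (hxAc α) <| by
      rintro _ ⟨s, hs, rfl⟩
      exact ⟨t * s, mul_mem_of_notMem hcover hprod ht hs, map_mul g t s⟩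
  rw [hgt, hinvG.1] at htx
  obtain ⟨s, -, rfl⟩ := hT.closure_subset htx
  exact mem_range_self s

end Cover

theorem stmt_12_general {S : Type u} [TopologicalSpace S] [Semigroup S]
    (inv : S → S) (hinv : InvSgrp inv)
    {ι : Type*} (A : ι → Subsemigroup S)
    (hAinv : ∀ α, ∀ x ∈ A α, inv x ∈ A α)
    (hcover : ∀ x : S, ∃ α, x ∈ A α)
    (hHc : ∀ α, IsAbsHClosedTIS ↥(A α))
    (T : Subsemigroup S)
    (hTHc : IsAbsHClosedTIS ↥T)
    (hprod : ∀ α β, α ≠ β → ∀ x ∈ A α, ∀ y ∈ A β, x * y ∈ T) :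
    IsAbsHClosedTIS S := by
  rw [isAbsHClosedTIS_iff]
  intro G _ _ _ _ invG hinvGc hinvG g hg
  exact isClosed_range_of_isClosed_image hinvGc hinv hinvG hAinv
    hcover hprod g (fun α => (hHc α).isClosed_image hinvGc hinvG g hg)
    (hTHc.isClosed_image hinvGc hinvG g hg)

/-- Let `S = ⋃_{α} S_α` be a topological inverse semigroup such that
(i) each `S_α` is an absolutely `H`-closed subsemigroup in the class of topological
inverse semigroups, and (ii) there is an absolutely `H`-closed (in that class)
subsemigroup `T` with `S_α · S_β ⊆ T` for all `α ≠ β`.  Then `S` is absolutely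
`H`-closed in the class of topological inverse semigroups. -/
theorem stmt_12 {S : Type u} [TopologicalSpace S] [Semigroup S] [T2Space S]
    [ContinuousMul S]
    (inv : S → S) (hinvc : Continuous inv) (hinv : InvSgrp inv)
    {ι : Type*} (A : ι → Subsemigroup S)
    (hAinv : ∀ α, ∀ x ∈ A α, inv x ∈ A α)
    (hcover : ∀ x : S, ∃ α, x ∈ A α)
    (hHc : ∀ α, IsAbsHClosedTIS ↥(A α))
    (T : Subsemigroup S) (hTinv : ∀ x ∈ T, inv x ∈ T)
    (hTHc : IsAbsHClosedTIS ↥T)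
    (hprod : ∀ α β, α ≠ β → ∀ x ∈ A α, ∀ y ∈ A β, x * y ∈ T) :
    IsAbsHClosedTIS S :=
  stmt_12_general inv hinv A hAinv hcover hHc T hTHc hprod
end

section
/- Let a topological inverse semigroup S be an orthogonal sum of a family {S_α}_{α∈A} of topological inverse semigroups with zero, each of which is H-closed in the class of topological inverse semigroups. Then S is H-closed in the class of topological inverse semigroups. -/
universe u

/-- Let a topological inverse semigroup `S` be an orthogonal sum of a
family `{S_α}` of topological inverse semigroups with zero (all summands share the
zero of `S`, pairwise intersections are `{0}`, products across distinct summands are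
`0`, and the summands cover `S`), each of which is `H`-closed in the class of
topological inverse semigroups.  Then `S` is `H`-closed in the class of topological
inverse semigroups. -/
theorem stmt_13 {S : Type u} [TopologicalSpace S] [SemigroupWithZero S] [T2Space S]
    [ContinuousMul S]
    (inv : S → S) (hinvc : Continuous inv) (hinv : InvSgrp inv)
    {ι : Type*} (A : ι → Subsemigroup S)
    (h0 : ∀ α, (0 : S) ∈ A α)
    (hAinv : ∀ α, ∀ x ∈ A α, inv x ∈ A α)
    (hcover : ∀ x : S, ∃ α, x ∈ A α)
    (hmeet : ∀ α β, α ≠ β → (A α : Set S) ∩ (A β : Set S) = {0})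
    (hcross : ∀ α β, α ≠ β → ∀ x ∈ A α, ∀ y ∈ A β, x * y = 0)
    (hHc : ∀ α, IsHClosedTIS ↥(A α)) :
    IsHClosedTIS S := by
  intro T _ _ _ _ invT hinvTc hinvT f hf hfm
  -- `f` preserves inversion
  have hfinv : ∀ x : S, f (inv x) = invT (f x) := by
    intro x
    apply hinvT.2.2
    · rw [← hfm, ← hfm, hinv.1 x]
    · rw [← hfm, ← hfm, hinv.2.1 x]
  apply isClosed_of_closure_subset
  intro t ht
  by_cases hP : ∃ α, ∃ U ∈ nhds t, ∀ s : S, f s ∈ U → s ∈ A α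
  · obtain ⟨α, U, hU, hUs⟩ := hP
    have hemb : Topology.IsEmbedding (fun x : ↥(A α) => f ↑x) :=
      hf.comp Topology.IsEmbedding.subtypeVal
    have hcl : IsClosed (Set.range fun x : ↥(A α) => f ↑x) := by
      refine hHc α T invT hinvTc hinvT _ hemb ?_
      intro x y
      have : ((x * y : ↥(A α)) : S) = (x : S) * (y : S) := rfl
      rw [this, hfm]
    have htc : t ∈ closure (Set.range fun x : ↥(A α) => f ↑x) := by
      rw [mem_closure_iff_nhds]
      intro V hV
      obtain ⟨w, hw, s, rfl⟩ := (mem_closure_iff_nhds.mp ht (V ∩ U)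
        (Filter.inter_mem hV hU))
      exact ⟨f s, hw.1, ⟨⟨s, hUs s hw.2⟩, rfl⟩⟩
    rw [hcl.closure_eq] at htc
    obtain ⟨x, hx⟩ := htc
    exact ⟨↑x, hx⟩
  · push_neg at hP
    -- key : near t we find images of elements of distinct summands
    have key : ∀ U ∈ nhds t, ∃ s₁ s₂ : S, f s₁ ∈ U ∧ f s₂ ∈ U ∧ s₁ * inv s₂ = 0 := by
      intro U hU
      obtain ⟨w, hw, s₁, rfl⟩ := mem_closure_iff_nhds.mp ht U hU
      obtain ⟨α₁, hα₁⟩ := hcover s₁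
      obtain ⟨s₂, hs₂U, hs₂⟩ := hP α₁ U hU
      obtain ⟨α₂, hα₂⟩ := hcover s₂
      have hne : α₁ ≠ α₂ := fun h => hs₂ (h ▸ hα₂)
      exact ⟨s₁, s₂, hw, hs₂U,
        hcross α₁ α₂ hne s₁ hα₁ (inv s₂) (hAinv α₂ s₂ hα₂)⟩
    have h1 : t * invT t = f 0 := by
      have hmem : t * invT t ∈ closure {f 0} := by
        rw [mem_closure_iff_nhds]
        intro W hW
        have cont : ContinuousAt (fun p : T × T => p.1 * invT p.2) (t, t) :=
          (continuous_fst.mul (hinvTc.comp continuous_snd)).continuousAt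
        have hpre : (fun p : T × T => p.1 * invT p.2) ⁻¹' W ∈ nhds (t, t) := cont hW
        rw [mem_nhds_prod_iff] at hpre
        obtain ⟨U₁, hU₁, U₂, hU₂, hsub⟩ := hpre
        obtain ⟨s₁, s₂, hs₁, hs₂, hz⟩ := key (U₁ ∩ U₂) (Filter.inter_mem hU₁ hU₂)
        refine ⟨f 0, ?_, rfl⟩
        have hp : (f s₁, f s₂) ∈ U₁ ×ˢ U₂ := ⟨hs₁.1, hs₂.2⟩
        have : f s₁ * invT (f s₂) ∈ W := hsub hp
        rwa [← hfinv, ← hfm, hz] at this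
      rwa [closure_singleton, Set.mem_singleton_iff] at hmem
    have h2 : f 0 * t = f 0 := by
      have hmem : f 0 * t ∈ closure {f 0} := by
        rw [mem_closure_iff_nhds]
        intro W hW
        have cont : ContinuousAt (fun v : T => f 0 * v) t :=
          (continuous_const.mul continuous_id).continuousAt
        have hpre : (fun v : T => f 0 * v) ⁻¹' W ∈ nhds t := cont hW
        obtain ⟨s₁, s₂, hs₁, hs₂, _⟩ := key _ hpre
        refine ⟨f 0, ?_, rfl⟩
        have : f 0 * f s₂ ∈ W := hs₂
        rwa [← hfm, zero_mul] at this
      rwa [closure_singleton, Set.mem_singleton_iff] at hmem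
    refine ⟨0, ?_⟩
    rw [← hinvT.1 t, h1, h2]
end

section
/- Let a (discrete) inverse semigroup S be an orthogonal sum of a family {S_α}_{α∈A} of inverse semigroups with zero, each algebraically closed in the class of topological inverse semigroups. Then S is algebraically closed in the class of topological inverse semigroups. -/
universe u

/-- An inverse semigroup `S` (with inversion `inv`) is algebraically closed in the
class of topological inverse semigroups if, for every Hausdorff topology `τ` on `S`
making `S` a topological inverse semigroup, `(S, τ)` is `H`-closed in that class. -/
def IsAlgClosedTIS (S : Type u) [Semigroup S] (inv : S → S) : Prop :=
  ∀ τ : TopologicalSpace S, @T2Space S τ → @ContinuousMul S τ _ →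
    @Continuous S S τ τ inv → @IsHClosedTIS S τ _

/-- Let an inverse semigroup `S` be an orthogonal sum of a family
`{S_α}` of inverse semigroups with zero (all summands share the zero of `S`, pairwise
intersections are `{0}`, products across distinct summands are `0`, and the summands
cover `S`), each algebraically closed in the class of topological inverse semigroups.
Then `S` is algebraically closed in the class of topological inverse semigroups. -/
theorem stmt_16 {S : Type u} [SemigroupWithZero S]
    (inv : S → S) (hinv : InvSgrp inv)
    {ι : Type*} (A : ι → Subsemigroup S)
    (h0 : ∀ α, (0 : S) ∈ A α)
    (hAinv : ∀ α, ∀ x ∈ A α, inv x ∈ A α)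
    (hcover : ∀ x : S, ∃ α, x ∈ A α)
    (hmeet : ∀ α β, α ≠ β → (A α : Set S) ∩ (A β : Set S) = {0})
    (hcross : ∀ α β, α ≠ β → ∀ x ∈ A α, ∀ y ∈ A β, x * y = 0)
    (hAc : ∀ α, IsAlgClosedTIS ↥(A α)
      (fun x : ↥(A α) => ⟨inv ↑x, hAinv α ↑x x.2⟩)) :
    IsAlgClosedTIS S inv := by
  intro τ hT2 hmulS hcontinv
  intro T _ _ _ _ invT hcontinvT hinvT f hf hfm
  -- f commutes with inversion
  have hfi : ∀ y : S, f (inv y) = invT (f y) := by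
    intro y
    refine hinvT.2.2 (f y) (f (inv y)) ?_ ?_
    · rw [← hfm, ← hfm, hinv.1]
    · rw [← hfm, ← hfm, hinv.2.1]
  apply isClosed_of_closure_subset
  intro t ht
  by_cases htr : t ∈ Set.range f
  · exact htr
  exfalso
  have htne : t ≠ f 0 := fun h => htr ⟨0, h.symm⟩
  obtain ⟨U, V, hU, hV, htU, h0V, hUV⟩ := t2_separation htne
  -- the map ψ (a,b) = a * invT b * a is continuous
  have hψ : Continuous (fun p : T × T => p.1 * invT p.2 * p.1) :=
    (continuous_fst.mul (hcontinvT.comp continuous_snd)).mul continuous_fst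
  have hmem : (t, t) ∈ (fun p : T × T => p.1 * invT p.2 * p.1) ⁻¹' U := by
    simp only [Set.mem_preimage, hinvT.1 t]
    exact htU
  obtain ⟨U1, U2, hU1, hU2, htU1, htU2, hsub⟩ :=
    isOpen_prod_iff.mp (hψ.isOpen_preimage U hU) t t hmem
  set W : Set T := U1 ∩ U2 ∩ U with hWdef
  have hWopen : IsOpen W := (hU1.inter hU2).inter hU
  have htW : t ∈ W := ⟨⟨htU1, htU2⟩, htU⟩
  -- pick a base point x₀ with f x₀ ∈ W
  obtain ⟨_, hw, x₀, rfl⟩ := mem_closure_iff.mp ht W hWopen htW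
  obtain ⟨α₀, hx₀⟩ := hcover x₀
  -- every point of S mapped into W lies in A α₀
  have key : ∀ y : S, f y ∈ W → y ∈ A α₀ := by
    intro y hy
    obtain ⟨β, hyβ⟩ := hcover y
    by_cases hβ : β = α₀
    · exact hβ ▸ hyβ
    · exfalso
      have hz : x₀ * inv y * x₀ = 0 := by
        rw [hcross α₀ β (fun h => hβ h.symm) x₀ hx₀ (inv y) (hAinv β y hyβ),
          zero_mul]
      have hUmem : f x₀ * invT (f y) * f x₀ ∈ U :=
        hsub (Set.mk_mem_prod hw.1.1 hy.1.2)
      rw [← hfi, ← hfm, ← hfm, hz] at hUmem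
      exact hUV.ne_of_mem hUmem h0V rfl
  -- the summand A α₀ is H-closed for the subspace topology
  have hcontA : @Continuous ↥(A α₀) ↥(A α₀) _ _
      (fun x : ↥(A α₀) => (⟨inv ↑x, hAinv α₀ ↑x x.2⟩ : ↥(A α₀))) :=
    Continuous.subtype_mk (hcontinv.comp continuous_subtype_val) _
  have hHC : IsHClosedTIS ↥(A α₀) :=
    hAc α₀ instTopologicalSpaceSubtype inferInstance inferInstance hcontA
  have hgE : Topology.IsEmbedding (f ∘ (Subtype.val : ↥(A α₀) → S)) :=
    hf.comp Topology.IsEmbedding.subtypeVal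
  have hgM : ∀ x y : ↥(A α₀),
      (f ∘ Subtype.val) (x * y) = (f ∘ Subtype.val) x * (f ∘ Subtype.val) y := by
    intro x y
    simpa using hfm x.1 y.1
  have hclosed : IsClosed (Set.range (f ∘ (Subtype.val : ↥(A α₀) → S))) :=
    hHC T invT hcontinvT hinvT _ hgE hgM
  -- t lies in the closure of the image of A α₀
  have htA : t ∈ closure (Set.range (f ∘ (Subtype.val : ↥(A α₀) → S))) := by
    rw [mem_closure_iff]
    intro O hO htO
    obtain ⟨_, ⟨hOW, hW'⟩, y, rfl⟩ :=
      mem_closure_iff.mp ht (O ∩ W) (hO.inter hWopen) ⟨htO, htW⟩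
    exact ⟨f y, hOW, ⟨y, key y hW'⟩, rfl⟩
  rw [hclosed.closure_eq] at htA
  obtain ⟨⟨y, _⟩, hy⟩ := htA
  exact htr ⟨y, hy⟩
end

section
/- In a Hausdorff topological inverse semigroup S with zero in which every non-zero idempotent is primitive and S is an orthogonal sum of Brandt semigroups B_{λ_i}(G_i), every non-zero H-class of S is an open subset of S. -/
/-- Let `S` be a Hausdorff topological inverse semigroup with zero in
which every non-zero idempotent is primitive and which is an orthogonal sum of Brandt
semigroups `B_{λ i}(G i)` (the non-zero part of each summand embedded via
`f i : L i × G i × L i → S`).  Then every non-zero `H`-class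
`{f i (α, g, β) : g ∈ G i}` of `S` is open in `S`. -/
theorem stmt_19 {S : Type*} [SemigroupWithZero S] [TopologicalSpace S] [T2Space S]
    [ContinuousMul S]
    (inv : S → S) (hinvc : Continuous inv) (hinv : InvSgrp inv)
    (hprim : ∀ e : S, e ≠ 0 → e * e = e →
      ∀ f : S, f ≠ 0 → f * f = f → e * f = f → f * e = f → f = e)
    {ι : Type*} {L : ι → Type*} {G : ι → Type*} [∀ i, Group (G i)]
    (f : ∀ i, L i × G i × L i → S)
    (hne : ∀ i p, f i p ≠ 0)
    (hinj : ∀ i, Function.Injective (f i))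
    (hdis : ∀ i j, i ≠ j → ∀ p q, f i p ≠ f j q)
    (hcover : ∀ x : S, x ≠ 0 → ∃ i p, f i p = x)
    (hbrandt : ∀ i (a : L i) (g : G i) (b c : L i) (h : G i) (d : L i),
      (b = c → f i (a, g, b) * f i (c, h, d) = f i (a, g * h, d)) ∧
      (b ≠ c → f i (a, g, b) * f i (c, h, d) = 0))
    (hcross : ∀ i j, i ≠ j → ∀ p q, f i p * f j q = 0) :
    ∀ i (α β : L i), IsOpen {x : S | ∃ g : G i, x = f i (α, g, β)} := by
  intro i α β
  -- inversion on the Brandt coordinates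
  have hinvf : ∀ j (γ : L j) (h : G j) (δ : L j),
      inv (f j (γ, h, δ)) = f j (δ, h⁻¹, γ) := by
    intro j γ h δ
    refine (hinv.2.2 _ _ ?_ ?_).symm
    · rw [(hbrandt j γ h δ δ h⁻¹ γ).1 rfl, (hbrandt j γ (h * h⁻¹) γ γ h δ).1 rfl]
      simp
    · rw [(hbrandt j δ h⁻¹ γ γ h δ).1 rfl, (hbrandt j δ (h⁻¹ * h) δ δ h⁻¹ γ).1 rfl]
      simp
  set x0 := f i (α, (1 : G i), β) with hx0
  have hset : {x : S | ∃ g : G i, x = f i (α, g, β)} =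
      {y : S | x0 * inv y * y ≠ 0} ∩ {y : S | y * inv y * x0 ≠ 0} := by
    ext y
    constructor
    · rintro ⟨g, rfl⟩
      rw [Set.mem_inter_iff, Set.mem_setOf_eq, Set.mem_setOf_eq, hinvf]
      constructor
      · rw [hx0, (hbrandt i α 1 β β g⁻¹ α).1 rfl, (hbrandt i α (1 * g⁻¹) α α g β).1 rfl]
        exact hne i _
      · rw [hx0, (hbrandt i α g β β g⁻¹ α).1 rfl, (hbrandt i α (g * g⁻¹) α α 1 β).1 rfl]
        exact hne i _
    · rintro ⟨h1, h2⟩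
      simp only [Set.mem_setOf_eq] at h1 h2
      rcases eq_or_ne y 0 with rfl | hy
      · simp at h1
      obtain ⟨j, ⟨γ, h, δ⟩, rfl⟩ := hcover y hy
      rw [hinvf] at h1 h2
      rcases eq_or_ne i j with rfl | hij
      · rcases eq_or_ne β δ with rfl | hbd
        · rcases eq_or_ne γ α with rfl | hga
          · exact ⟨h, rfl⟩
          · exfalso
            apply h2
            rw [(hbrandt i γ h β β h⁻¹ γ).1 rfl, hx0]
            exact (hbrandt i γ (h * h⁻¹) γ α 1 β).2 hga
        · exfalso
          apply h1
          rw [hx0, (hbrandt i α 1 β δ h⁻¹ γ).2 hbd, zero_mul]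
      · exfalso
        apply h1
        rw [hcross i j hij, zero_mul]
  rw [hset]
  have hc1 : Continuous fun y : S => x0 * inv y * y :=
    (continuous_const.mul hinvc).mul continuous_id
  have hc2 : Continuous fun y : S => y * inv y * x0 :=
    (continuous_id.mul hinvc).mul continuous_const
  exact (isOpen_compl_singleton.preimage hc1).inter (isOpen_compl_singleton.preimage hc2)
end
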